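/- arXiv:2109.07398 — 12 statements merged into one kernel-verified Lean document; each statement's English description precedes it below -/
import Mathlib

section
/- Let u : ℝ³ × [0,T) → ℝ³ be a C¹ vector field and let η : ℝ³ × [0,T) → ℝ³ be a C¹ infinitesimal contemporaneous symmetry of u, i.e. ∂η/∂t + (u·∇)η − (η·∇)u = 0 everywhere. Let X : [0,T) → ℝ³ be differentiable with X'(t) = u(X(t),t) for all t ∈ [0,T). Then for every t ∈ [0,T) one has η(X(t),t) = 0 if and only if η(X(0),0) = 0. -/
open Set

/-- Auxiliary: a curve that solves a linear (in space) ODE on `[0, t₁]`, with continuous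
coefficient matrix, vanishes at `t₁` iff it vanishes at `0`. -/
theorem linear_ODE_zero_iff (t₁ : ℝ) (ht₁ : 0 ≤ t₁)
    (A : ℝ → ((Fin 3 → ℝ) →L[ℝ] (Fin 3 → ℝ)))
    (hAb : ∃ C : ℝ, ∀ t ∈ Icc (0:ℝ) t₁, ‖A t‖ ≤ C)
    (f : ℝ → (Fin 3 → ℝ))
    (hf : ∀ t ∈ Icc (0:ℝ) t₁, HasDerivAt f (A t (f t)) t) :
    f t₁ = 0 ↔ f 0 = 0 := by
  obtain ⟨C, hC⟩ := hAb
  set π : ℝ → ℝ := fun t => min (max t 0) t₁ with hπdef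
  have hπmem : ∀ t, π t ∈ Icc (0:ℝ) t₁ := fun t =>
    ⟨le_min (le_max_right _ _) ht₁, min_le_right _ _⟩
  have hπeq : ∀ t ∈ Icc (0:ℝ) t₁, π t = t := by
    intro t ht
    simp only [hπdef]
    rw [max_eq_left ht.1, min_eq_left ht.2]
  set v : ℝ → (Fin 3 → ℝ) → (Fin 3 → ℝ) := fun t x => A (π t) x with hvdef
  set K : NNReal := Real.toNNReal C with hKdef
  have hv : ∀ t, LipschitzWith K (v t) := by
    intro t
    refine LipschitzWith.weaken (A (π t)).lipschitz ?_
    rw [hKdef, ← norm_toNNReal]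
    exact Real.toNNReal_le_toNNReal (hC _ (hπmem t))
  have hfc : ContinuousOn f (Icc 0 t₁) := fun t ht =>
    ((hf t ht).continuousAt).continuousWithinAt
  have hgc : ContinuousOn (fun _ : ℝ => (0 : Fin 3 → ℝ)) (Icc 0 t₁) := continuousOn_const
  have hfv : ∀ t ∈ Icc (0:ℝ) t₁, HasDerivAt f (v t (f t)) t := by
    intro t ht
    have h := hf t ht
    simp only [hvdef]
    rw [hπeq t ht]
    exact h
  have hgv : ∀ t : ℝ, v t (0 : Fin 3 → ℝ) = 0 := fun t => (A (π t)).map_zero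
  constructor
  · intro h1
    have := ODE_solution_unique_of_mem_Icc_left (s := fun _ => (univ : Set (Fin 3 → ℝ)))
      (fun t _ => (hv t).lipschitzOnWith) hfc
      (fun t ht => ((hfv t (Ioc_subset_Icc_self ht)).hasDerivWithinAt))
      (fun _ _ => trivial) hgc
      (fun t _ => by simpa [hgv t] using
        (hasDerivWithinAt_const t (Iic t) (0 : Fin 3 → ℝ)))
      (fun _ _ => trivial) (by simpa [h1])
    exact this ⟨le_rfl, ht₁⟩
  · intro h0
    have := ODE_solution_unique_of_mem_Icc_right (s := fun _ => (univ : Set (Fin 3 → ℝ)))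
      (fun t _ => (hv t).lipschitzOnWith) hfc
      (fun t ht => ((hfv t (Ico_subset_Icc_self ht)).hasDerivWithinAt))
      (fun _ _ => trivial) hgc
      (fun t _ => by simpa [hgv t] using
        (hasDerivWithinAt_const t (Ici t) (0 : Fin 3 → ℝ)))
      (fun _ _ => trivial) (by simpa [h0])
    exact this ⟨ht₁, le_rfl⟩

/-- Zeroes of an infinitesimal contemporaneous symmetry follow the pathlines:
if `η` is a C¹ infinitesimal symmetry of the C¹ field `u` on `ℝ³ × [0,T)` and `X` is a
pathline of `u` on `[0,T)`, then `η (X t) t = 0` iff `η (X 0) 0 = 0`. -/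
theorem stmt1 (T : ℝ) (hT : 0 < T)
    (u η : (Fin 3 → ℝ) → ℝ → (Fin 3 → ℝ))
    (hu : ContDiff ℝ 1 fun p : (Fin 3 → ℝ) × ℝ => u p.1 p.2)
    (hη : ContDiff ℝ 1 fun p : (Fin 3 → ℝ) × ℝ => η p.1 p.2)
    (hsymm : ∀ (x : Fin 3 → ℝ), ∀ t ∈ Set.Ico (0:ℝ) T,
      deriv (fun s => η x s) t
        + fderiv ℝ (fun y => η y t) x (u x t)
        - fderiv ℝ (fun y => u y t) x (η x t) = 0)
    (X : ℝ → (Fin 3 → ℝ))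
    (hX : ∀ t ∈ Set.Ico (0:ℝ) T, HasDerivAt X (u (X t) t) t) :
    ∀ t ∈ Set.Ico (0:ℝ) T, (η (X t) t = 0 ↔ η (X 0) 0 = 0) := by
  intro t₁ ht₁
  obtain ⟨ht₁0, ht₁T⟩ := ht₁
  set f : ℝ → (Fin 3 → ℝ) := fun s => η (X s) s with hf_def
  have hηd : Differentiable ℝ (fun p : (Fin 3 → ℝ) × ℝ => η p.1 p.2) :=
    hη.differentiable one_ne_zero
  have hud : Differentiable ℝ (fun p : (Fin 3 → ℝ) × ℝ => u p.1 p.2) :=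
    hu.differentiable one_ne_zero
  set A : ℝ → ((Fin 3 → ℝ) →L[ℝ] (Fin 3 → ℝ)) :=
    fun t => fderiv ℝ (fun y => u y t) (X t) with hAdef
  -- derivative of f along the pathline
  have hf' : ∀ t ∈ Ico (0:ℝ) T, HasDerivAt f (A t (f t)) t := by
    intro t ht
    have hD : HasFDerivAt (fun p : (Fin 3 → ℝ) × ℝ => η p.1 p.2)
        (fderiv ℝ (fun p : (Fin 3 → ℝ) × ℝ => η p.1 p.2) (X t, t)) (X t, t) :=
      (hηd (X t, t)).hasFDerivAt
    set D := fderiv ℝ (fun p : (Fin 3 → ℝ) × ℝ => η p.1 p.2) (X t, t) with hDdef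
    have hXt : HasDerivAt (fun s => (X s, s)) (u (X t) t, 1) t :=
      HasDerivAt.prodMk (hX t ht) (hasDerivAt_id t)
    have hcomp : HasDerivAt f (D (u (X t) t, 1)) t := by
      have := HasFDerivAt.comp_hasDerivAt (f := fun s => (X s, s)) (x := t) hD hXt
      exact this
    have h1 : HasFDerivAt (fun y => η y t)
        (D.comp (ContinuousLinearMap.inl ℝ (Fin 3 → ℝ) ℝ)) (X t) := by
      have hincl : HasFDerivAt (fun y : Fin 3 → ℝ => (y, t))
          (ContinuousLinearMap.inl ℝ (Fin 3 → ℝ) ℝ) (X t) :=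
        HasFDerivAt.prodMk (hasFDerivAt_id (X t)) (hasFDerivAt_const t (X t))
      exact hD.comp (X t) hincl
    have h2 : HasDerivAt (fun s => η (X t) s) (D (0, 1)) t := by
      have hincl : HasDerivAt (fun s : ℝ => ((X t : Fin 3 → ℝ), s))
          ((0 : Fin 3 → ℝ), (1 : ℝ)) t :=
        HasDerivAt.prodMk (hasDerivAt_const t (X t)) (hasDerivAt_id t)
      exact hD.comp_hasDerivAt t hincl
    have e1 : fderiv ℝ (fun y => η y t) (X t) (u (X t) t) = D (u (X t) t, 0) := by
      rw [h1.fderiv]; rfl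
    have e2 : deriv (fun s => η (X t) s) t = D (0, 1) := h2.deriv
    have hsym := hsymm (X t) t ht
    have hsym' : deriv (fun s => η (X t) s) t
        + fderiv ℝ (fun y => η y t) (X t) (u (X t) t) = A t (f t) := by
      have := sub_eq_zero.mp hsym
      simpa [hAdef, hf_def] using this
    have key : D (u (X t) t, 1) = A t (f t) := by
      have hsplit : D (u (X t) t, 1) = D (u (X t) t, 0) + D (0, 1) := by
        rw [← D.map_add]
        norm_num
      rw [hsplit, ← e1, ← e2, add_comm]
      exact hsym'
    rwa [key] at hcomp
  -- bound the coefficient on the compact interval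
  have hsub : Icc (0:ℝ) t₁ ⊆ Ico 0 T := fun s hs => ⟨hs.1, lt_of_le_of_lt hs.2 ht₁T⟩
  have hXc : ContinuousOn X (Icc 0 t₁) := fun s hs =>
    ((hX s (hsub hs)).continuousAt).continuousWithinAt
  have hAeq : ∀ t, A t = (fderiv ℝ (fun p : (Fin 3 → ℝ) × ℝ => u p.1 p.2) (X t, t)).comp
      (ContinuousLinearMap.inl ℝ (Fin 3 → ℝ) ℝ) := by
    intro t
    have hD := (hud (X t, t)).hasFDerivAt
    have h1 := hD.comp (X t)
      (show HasFDerivAt (fun y : Fin 3 → ℝ => (y, t)) (ContinuousLinearMap.inl ℝ (Fin 3 → ℝ) ℝ) (X t) from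
        HasFDerivAt.prodMk (hasFDerivAt_id (X t)) (hasFDerivAt_const t (X t)))
    exact h1.fderiv
  have hAb : ∃ C : ℝ, ∀ t ∈ Icc (0:ℝ) t₁, ‖A t‖ ≤ C := by
    have hcontD : Continuous (fderiv ℝ (fun p : (Fin 3 → ℝ) × ℝ => u p.1 p.2)) :=
      hu.continuous_fderiv one_ne_zero
    have hcurve : ContinuousOn (fun t : ℝ => (X t, t)) (Icc 0 t₁) :=
      hXc.prodMk continuousOn_id
    have hnorm : ContinuousOn
        (fun t : ℝ => ‖fderiv ℝ (fun p : (Fin 3 → ℝ) × ℝ => u p.1 p.2) (X t, t)‖)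
        (Icc 0 t₁) := ((hcontD.comp_continuousOn hcurve).norm)
    obtain ⟨C, hC⟩ := (isCompact_Icc).exists_bound_of_continuousOn hnorm
    refine ⟨C * ‖(ContinuousLinearMap.inl ℝ (Fin 3 → ℝ) ℝ)‖, fun t ht => ?_⟩
    rw [hAeq t]
    calc ‖_‖ ≤ ‖fderiv ℝ (fun p : (Fin 3 → ℝ) × ℝ => u p.1 p.2) (X t, t)‖
          * ‖(ContinuousLinearMap.inl ℝ (Fin 3 → ℝ) ℝ)‖ :=
        ContinuousLinearMap.opNorm_comp_le _ _
      _ ≤ C * ‖(ContinuousLinearMap.inl ℝ (Fin 3 → ℝ) ℝ)‖ := by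
        have h := hC t ht
        rw [norm_norm] at h
        exact mul_le_mul_of_nonneg_right h (norm_nonneg _)
  have := linear_ODE_zero_iff t₁ ht₁0 A hAb f (fun t ht => hf' t (hsub ht))
  simpa [hf_def] using this
end

section
/- Let u : ℝ³ × ℝ → ℝ³ be a C¹ divergence-free vector field (∇·u = 0 everywhere), and let η₁, η₂ : ℝ³ × ℝ → ℝ³ be C¹ infinitesimal contemporaneous symmetries of u, i.e. ∂ηᵢ/∂t + (u·∇)ηᵢ − (ηᵢ·∇)u = 0 everywhere for i = 1,2. Then the cross product w := η₁ × η₂ satisfies the adjoint transport equation ∂w/∂t + (u·∇)w + (∇u)ᵀw = 0 at every (x,t), where (∇u)ᵀ is the transpose of the spatial Jacobian matrix of u, i.e. [(∇u)ᵀw]ⁱ = Σⱼ (∂uʲ/∂xⁱ) wʲ. -/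
noncomputable def crossL : (Fin 3 → ℝ) →L[ℝ] (Fin 3 → ℝ) →L[ℝ] (Fin 3 → ℝ) :=
  LinearMap.toContinuousLinearMap
    ((LinearMap.toContinuousLinearMap :
        ((Fin 3 → ℝ) →ₗ[ℝ] (Fin 3 → ℝ)) ≃ₗ[ℝ] ((Fin 3 → ℝ) →L[ℝ] (Fin 3 → ℝ))).toLinearMap
      ∘ₗ crossProduct)

@[simp] lemma crossL_apply (a b : Fin 3 → ℝ) : crossL a b = crossProduct a b := rfl

noncomputable def div3 (v : (Fin 3 → ℝ) → (Fin 3 → ℝ)) (x : Fin 3 → ℝ) : ℝ :=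
  ∑ i : Fin 3, fderiv ℝ v x (Pi.single i 1) i

noncomputable def gradT (v : (Fin 3 → ℝ) → (Fin 3 → ℝ)) (x : Fin 3 → ℝ)
    (w : Fin 3 → ℝ) : Fin 3 → ℝ :=
  fun i => ∑ j : Fin 3, fderiv ℝ v x (Pi.single i 1) j * w j

lemma key (A : (Fin 3 → ℝ) →L[ℝ] (Fin 3 → ℝ)) (a b : Fin 3 → ℝ)
    (htr : ∑ i : Fin 3, A (Pi.single i 1) i = 0) :
    crossProduct (A a) b + crossProduct a (A b)
      + (fun i => ∑ j : Fin 3, A (Pi.single i 1) j * crossProduct a b j) = 0 := by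
  have hA : ∀ v : Fin 3 → ℝ, A v = ∑ j : Fin 3, v j • A (Pi.single j 1) := by
    intro v
    conv_lhs => rw [← Finset.univ_sum_single v]
    rw [map_sum]
    refine Finset.sum_congr rfl fun j _ => ?_
    rw [← map_smul]
    congr 1
    funext k
    simp [Pi.single_apply, Pi.smul_apply]
  rw [Fin.sum_univ_three] at htr
  funext i
  rw [hA a, hA b]
  fin_cases i <;>
    simp [cross_apply, Fin.sum_univ_three, Finset.sum_apply, Pi.smul_apply, smul_eq_mul] <;>
    ring_nf
  · linear_combination (a 1 * b 2 - a 2 * b 1) * htr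
  · linear_combination (a 2 * b 0 - a 0 * b 2) * htr
  · linear_combination (a 0 * b 1 - a 1 * b 0) * htr

/-- If `u` is C¹ and divergence-free and `η₁, η₂` are C¹ infinitesimal
contemporaneous symmetries of `u`, then `w := η₁ × η₂` satisfies the adjoint transport
equation `∂w/∂t + (u·∇)w + (∇u)ᵀ w = 0`. -/
theorem stmt4 (u η₁ η₂ : (Fin 3 → ℝ) → ℝ → (Fin 3 → ℝ))
    (hu : ContDiff ℝ 1 fun p : (Fin 3 → ℝ) × ℝ => u p.1 p.2)
    (h1 : ContDiff ℝ 1 fun p : (Fin 3 → ℝ) × ℝ => η₁ p.1 p.2)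
    (h2 : ContDiff ℝ 1 fun p : (Fin 3 → ℝ) × ℝ => η₂ p.1 p.2)
    (hdivu : ∀ (x : Fin 3 → ℝ) (t : ℝ), div3 (fun y => u y t) x = 0)
    (hs1 : ∀ (x : Fin 3 → ℝ) (t : ℝ),
      deriv (fun s => η₁ x s) t
        + fderiv ℝ (fun y => η₁ y t) x (u x t)
        - fderiv ℝ (fun y => u y t) x (η₁ x t) = 0)
    (hs2 : ∀ (x : Fin 3 → ℝ) (t : ℝ),
      deriv (fun s => η₂ x s) t
        + fderiv ℝ (fun y => η₂ y t) x (u x t)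
        - fderiv ℝ (fun y => u y t) x (η₂ x t) = 0) :
    ∀ (x : Fin 3 → ℝ) (t : ℝ),
      deriv (fun s => crossProduct (η₁ x s) (η₂ x s)) t
        + fderiv ℝ (fun y => crossProduct (η₁ y t) (η₂ y t)) x (u x t)
        + gradT (fun y => u y t) x (crossProduct (η₁ x t) (η₂ x t)) = 0 := by
  intro x t
  -- differentiability of slices
  have hx1 : DifferentiableAt ℝ (fun y => η₁ y t) x :=
    ((h1.differentiable one_ne_zero) (x, t)).comp (f := fun y => (y, t)) x
      (differentiableAt_id.prodMk (differentiableAt_const t))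
  have hx2 : DifferentiableAt ℝ (fun y => η₂ y t) x :=
    ((h2.differentiable one_ne_zero) (x, t)).comp (f := fun y => (y, t)) x
      (differentiableAt_id.prodMk (differentiableAt_const t))
  have ht1 : DifferentiableAt ℝ (fun s => η₁ x s) t :=
    ((h1.differentiable one_ne_zero) (x, t)).comp (f := fun s => (x, s)) t
      ((differentiableAt_const x).prodMk differentiableAt_id)
  have ht2 : DifferentiableAt ℝ (fun s => η₂ x s) t :=
    ((h2.differentiable one_ne_zero) (x, t)).comp (f := fun s => (x, s)) t
      ((differentiableAt_const x).prodMk differentiableAt_id)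
  set a : Fin 3 → ℝ := η₁ x t with ha
  set b : Fin 3 → ℝ := η₂ x t with hb
  set a' : Fin 3 → ℝ := deriv (fun s => η₁ x s) t with ha'
  set b' : Fin 3 → ℝ := deriv (fun s => η₂ x s) t with hb'
  set D1 := fderiv ℝ (fun y => η₁ y t) x with hD1
  set D2 := fderiv ℝ (fun y => η₂ y t) x with hD2
  set A := fderiv ℝ (fun y => u y t) x with hAdef
  set v : Fin 3 → ℝ := u x t with hv
  -- time derivative of the cross product
  have hderiv : HasDerivAt (fun s => crossProduct (η₁ x s) (η₂ x s))
      (crossProduct a b' + crossProduct a' b) t := by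
    have hp : HasDerivAt (fun s => ((η₁ x s, η₂ x s) : (Fin 3 → ℝ) × (Fin 3 → ℝ)))
        (a', b') t := (ht1.hasDerivAt).prodMk (ht2.hasDerivAt)
    have hB := (crossL.isBoundedBilinearMap.hasFDerivAt (a, b)).comp_hasDerivAt t hp
    have : (crossL.isBoundedBilinearMap.deriv (a, b)) (a', b')
        = crossProduct a b' + crossProduct a' b := by
      rw [IsBoundedBilinearMap.deriv_apply]; simp
    rw [this] at hB
    exact hB
  -- space derivative of the cross product
  have hfd : HasFDerivAt (fun y => crossProduct (η₁ y t) (η₂ y t))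
      ((crossL.isBoundedBilinearMap.deriv (a, b)).comp (D1.prod D2)) x := by
    have hp : HasFDerivAt (fun y => ((η₁ y t, η₂ y t) : (Fin 3 → ℝ) × (Fin 3 → ℝ)))
        (D1.prod D2) x := (hx1.hasFDerivAt).prodMk (hx2.hasFDerivAt)
    have hB := (crossL.isBoundedBilinearMap.hasFDerivAt (a, b)).comp x hp
    exact hB
  have hfd' : fderiv ℝ (fun y => crossProduct (η₁ y t) (η₂ y t)) x v
      = crossProduct a (D2 v) + crossProduct (D1 v) b := by
    rw [hfd.fderiv]
    simp [IsBoundedBilinearMap.deriv_apply]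
  rw [hderiv.deriv, hfd']
  -- use the symmetry equations
  have e1 : a' + D1 v = A a := by
    have := hs1 x t
    rw [← ha, ← ha', ← hD1, ← hAdef, ← hv] at this
    linear_combination this
  have e2 : b' + D2 v = A b := by
    have := hs2 x t
    rw [← hb, ← hb', ← hD2, ← hAdef, ← hv] at this
    linear_combination this
  have hcalc : crossProduct a b' + crossProduct a' b
      + (crossProduct a (D2 v) + crossProduct (D1 v) b)
      = crossProduct (A a) b + crossProduct a (A b) := by
    rw [← e1, ← e2]
    simp [map_add, LinearMap.add_apply]
    abel
  rw [hcalc]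
  have htr : ∑ i : Fin 3, A (Pi.single i 1) i = 0 := hdivu x t
  have := key A a b htr
  calc crossProduct (A a) b + crossProduct a (A b) + gradT (fun y => u y t) x (crossProduct a b)
      = crossProduct (A a) b + crossProduct a (A b)
        + (fun i => ∑ j : Fin 3, A (Pi.single i 1) j * crossProduct a b j) := rfl
    _ = 0 := this
end

section
/- Let u : ℝ³ × ℝ → ℝ³ be a C¹ vector field and let C : ℝ³ × ℝ → ℝ be a C² scalar function such that its spatial gradient ∇C satisfies the transport equation ∂(∇C)/∂t + (u·∇)(∇C) + (∇u)ᵀ∇C = 0 at every (x,t), where [(∇u)ᵀw]ⁱ = Σⱼ (∂uʲ/∂xⁱ) wʲ. Then there exists a function f : ℝ → ℝ such that ∂C/∂t + (u·∇)C = f(t) for all (x,t); consequently, the function C'(x,t) := C(x,t) − ∫₀ᵗ f(s) ds is a constant of motion, i.e. ∂C'/∂t + (u·∇)C' = 0 everywhere. -/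
open ContinuousLinearMap


/-- The spatial gradient of a time-dependent scalar field on `ℝ³`. -/
noncomputable def grad3 (C : (Fin 3 → ℝ) → ℝ → ℝ) (x : Fin 3 → ℝ) (t : ℝ) : Fin 3 → ℝ :=
  fun i => fderiv ℝ (fun y => C y t) x (Pi.single i 1)

/-- If the spatial gradient of a C² scalar `C` satisfies the adjoint transport
equation `∂(∇C)/∂t + (u·∇)(∇C) + (∇u)ᵀ∇C = 0` for a C¹ field `u`, then there is `f : ℝ → ℝ`
with `∂C/∂t + (u·∇)C = f(t)` everywhere, and `C'(x,t) := C(x,t) − ∫₀ᵗ f` is a constant of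
motion: `∂C'/∂t + (u·∇)C' = 0` everywhere. -/
theorem stmt5 (u : (Fin 3 → ℝ) → ℝ → (Fin 3 → ℝ)) (C : (Fin 3 → ℝ) → ℝ → ℝ)
    (hu : ContDiff ℝ 1 fun p : (Fin 3 → ℝ) × ℝ => u p.1 p.2)
    (hC : ContDiff ℝ 2 fun p : (Fin 3 → ℝ) × ℝ => C p.1 p.2)
    (htrans : ∀ (x : Fin 3 → ℝ) (t : ℝ),
      deriv (fun s => grad3 C x s) t
        + fderiv ℝ (fun y => grad3 C y t) x (u x t)
        + gradT (fun y => u y t) x (grad3 C x t) = 0) :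
    ∃ f : ℝ → ℝ,
      (∀ (x : Fin 3 → ℝ) (t : ℝ),
        deriv (fun s => C x s) t + fderiv ℝ (fun y => C y t) x (u x t) = f t) ∧
      (∀ (x : Fin 3 → ℝ) (t : ℝ),
        deriv (fun s => C x s - ∫ r in (0:ℝ)..s, f r) t
          + fderiv ℝ (fun y => C y t - ∫ r in (0:ℝ)..t, f r) x (u x t) = 0) := by
  set F : (Fin 3 → ℝ) × ℝ → ℝ := fun p => C p.1 p.2 with hFdef
  set U : (Fin 3 → ℝ) × ℝ → (Fin 3 → ℝ) := fun p => u p.1 p.2 with hUdef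
  have hFd : Differentiable ℝ F := hC.differentiable two_ne_zero
  have hUd : Differentiable ℝ U := hu.differentiable one_ne_zero
  have hΦ : ContDiff ℝ 1 (fderiv ℝ F) := hC.fderiv_right (by norm_num)
  have hΦd : Differentiable ℝ (fderiv ℝ F) := hΦ.differentiable one_ne_zero
  -- slice lemmas
  have slice1 : ∀ (x : Fin 3 → ℝ) (t : ℝ),
      HasFDerivAt (fun y => F (y, t)) ((fderiv ℝ F (x,t)).comp (inl ℝ _ _)) x :=
    fun x t => by have := (hFd (x,t)).hasFDerivAt.comp x (hasFDerivAt_prodMk_left (𝕜 := ℝ) x t); exact this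
  have slice1U : ∀ (x : Fin 3 → ℝ) (t : ℝ),
      HasFDerivAt (fun y => U (y, t)) ((fderiv ℝ U (x,t)).comp (inl ℝ _ _)) x :=
    fun x t => by have := (hUd (x,t)).hasFDerivAt.comp x (hasFDerivAt_prodMk_left (𝕜 := ℝ) x t); exact this
  have slice2 : ∀ (x : Fin 3 → ℝ) (t : ℝ),
      HasDerivAt (fun s => F (x, s)) (fderiv ℝ F (x,t) (0,1)) t := by
    intro x t
    have := ((hFd (x,t)).hasFDerivAt.comp t (hasFDerivAt_prodMk_right (𝕜 := ℝ) x t)).hasDerivAt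
    simpa [Function.comp_def] using this
  have hgrad : ∀ (x : Fin 3 → ℝ) (t : ℝ),
      grad3 C x t = fun i => fderiv ℝ F (x,t) (Pi.single i 1, 0) := by
    intro x t
    funext i
    show fderiv ℝ (fun y => F (y, t)) x (Pi.single i 1) = _
    rw [(slice1 x t).fderiv]
    simp
  -- symmetry of second derivative
  have hsym : ∀ (p v w : (Fin 3 → ℝ) × ℝ),
      fderiv ℝ (fderiv ℝ F) p v w = fderiv ℝ (fderiv ℝ F) p w v :=
    fun p => hC.contDiffAt.isSymmSndFDerivAt (minSmoothness_of_isRCLikeNormedField (𝕜 := ℝ)).le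
  -- derivative of p ↦ fderiv F p w for fixed w
  have hφw : ∀ (w : (Fin 3 → ℝ) × ℝ) (p : (Fin 3 → ℝ) × ℝ),
      HasFDerivAt (fun q => fderiv ℝ F q w) ((fderiv ℝ (fderiv ℝ F) p).flip w) p := by
    intro w p
    have := (hΦd p).hasFDerivAt.clm_apply (hasFDerivAt_const w p)
    simpa using this
  -- expansion of vectors
  have expand : ∀ (a : Fin 3 → ℝ) (p : (Fin 3 → ℝ) × ℝ),
      ∑ j, a j * fderiv ℝ F p (Pi.single j 1, 0) = fderiv ℝ F p (a, 0) := by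
    intro a p
    have hv : ((a, (0:ℝ)) : (Fin 3 → ℝ) × ℝ)
        = ∑ j, a j • ((Pi.single j 1 : Fin 3 → ℝ), (0:ℝ)) := by
      rw [Prod.ext_iff]
      constructor
      · rw [Prod.fst_sum]
        simp only [Prod.smul_mk]
        ext k
        simp [Pi.single_apply, Finset.sum_apply, mul_comm]
      · rw [Prod.snd_sum]
        simp
    rw [hv, map_sum]
    refine Finset.sum_congr rfl fun j _ => ?_
    rw [map_smul, smul_eq_mul]
  -- translate the transport hypothesis
  have key : ∀ (x : Fin 3 → ℝ) (t : ℝ) (i : Fin 3),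
      fderiv ℝ (fderiv ℝ F) (x,t) (0,1) (Pi.single i 1, 0)
        + fderiv ℝ (fderiv ℝ F) (x,t) (u x t, 0) (Pi.single i 1, 0)
        + fderiv ℝ F (x,t) (fderiv ℝ U (x,t) (Pi.single i 1, 0), 0) = 0 := by
    intro x t i
    have h := congrFun (htrans x t) i
    simp only [Pi.add_apply, Pi.zero_apply] at h
    -- term 1
    have h1 : deriv (fun s => grad3 C x s) t
        = fun i => fderiv ℝ (fderiv ℝ F) (x,t) (0,1) (Pi.single i 1, 0) := by
      have hD : HasDerivAt (fun s => grad3 C x s)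
          (fun i => fderiv ℝ (fderiv ℝ F) (x,t) (0,1) (Pi.single i 1, 0)) t := by
        rw [hasDerivAt_pi]
        intro j
        have hcomp := ((hφw (Pi.single j 1, 0) (x,t)).comp t
          (hasFDerivAt_prodMk_right (𝕜 := ℝ) x t)).hasDerivAt
        have : (fun s => grad3 C x s j) = fun s => fderiv ℝ F (x,s) (Pi.single j 1, 0) := by
          funext s; rw [hgrad x s]
        rw [this]
        simpa [Function.comp_def] using hcomp
      exact hD.deriv
    -- term 2
    have h2 : fderiv ℝ (fun y => grad3 C y t) x (u x t)
        = fun i => fderiv ℝ (fderiv ℝ F) (x,t) (u x t, 0) (Pi.single i 1, 0) := by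
      have hD : HasFDerivAt (fun y => grad3 C y t)
          (ContinuousLinearMap.pi (fun i =>
            ((fderiv ℝ (fderiv ℝ F) (x,t)).flip (Pi.single i 1, 0)).comp (inl ℝ _ _))) x := by
        have : (fun y => grad3 C y t)
            = fun y i => fderiv ℝ F (y,t) (Pi.single i 1, 0) := by
          funext y; rw [hgrad y t]
        rw [this]
        rw [hasFDerivAt_pi]
        intro j
        exact (hφw (Pi.single j 1, 0) (x,t)).comp x (hasFDerivAt_prodMk_left (𝕜 := ℝ) x t)
      rw [hD.fderiv]
      funext i
      simp [hsym (x,t)]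
    -- term 3
    have h3 : gradT (fun y => u y t) x (grad3 C x t)
        = fun i => fderiv ℝ F (x,t) (fderiv ℝ U (x,t) (Pi.single i 1, 0), 0) := by
      funext i
      show ∑ j, fderiv ℝ (fun y => u y t) x (Pi.single i 1) j * grad3 C x t j = _
      have hfu : fderiv ℝ (fun y => u y t) x = (fderiv ℝ U (x,t)).comp (inl ℝ _ _) :=
        (slice1U x t).fderiv
      rw [hfu, hgrad x t]
      have he := expand (fderiv ℝ U (x,t) (Pi.single i 1, 0)) (x,t)
      simpa using he
    rw [h1, h2, h3] at h
    simpa using h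
  -- the material derivative g
  set g : (Fin 3 → ℝ) × ℝ → ℝ := fun p => fderiv ℝ F p (U p, 1) with hgdef
  have hgder : ∀ p : (Fin 3 → ℝ) × ℝ,
      HasFDerivAt g ((fderiv ℝ F p).comp ((fderiv ℝ U p).prod 0)
        + (fderiv ℝ (fderiv ℝ F) p).flip (U p, 1)) p := by
    intro p
    have := (hΦd p).hasFDerivAt.clm_apply ((hUd p).hasFDerivAt.prodMk (hasFDerivAt_const 1 p))
    simpa using this
  -- derivative of g in spatial directions vanishes
  have hDg0 : ∀ (x : Fin 3 → ℝ) (t : ℝ) (i : Fin 3),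
      ((fderiv ℝ F (x,t)).comp ((fderiv ℝ U (x,t)).prod 0)
        + (fderiv ℝ (fderiv ℝ F) (x,t)).flip (U (x,t), 1)) (Pi.single i 1, 0) = 0 := by
    intro x t i
    have hk := key x t i
    have hadd : ((U (x,t), (1:ℝ)) : (Fin 3 → ℝ) × ℝ) = (U (x,t), 0) + (0, 1) := by
      simp [Prod.ext_iff]
    simp only [ContinuousLinearMap.add_apply, ContinuousLinearMap.comp_apply,
      ContinuousLinearMap.prod_apply, ContinuousLinearMap.zero_apply,
      ContinuousLinearMap.flip_apply]
    rw [hsym (x,t) _ (U (x,t), 1), hadd, map_add, ContinuousLinearMap.add_apply]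
    have : U (x,t) = u x t := rfl
    rw [this]
    linarith [hk]
  -- g is constant in space
  have hgconst : ∀ (t : ℝ) (x y : Fin 3 → ℝ), g (x,t) = g (y,t) := by
    intro t x y
    apply is_const_of_fderiv_eq_zero (𝕜 := ℝ) (f := fun z => g (z,t))
    · intro z
      exact ((hgder (z,t)).comp z (hasFDerivAt_prodMk_left (𝕜 := ℝ) z t)).differentiableAt
    · intro z
      have H : HasFDerivAt (fun z => g (z,t))
          (((fderiv ℝ F (z,t)).comp ((fderiv ℝ U (z,t)).prod 0)
            + (fderiv ℝ (fderiv ℝ F) (z,t)).flip (U (z,t), 1)).comp (inl ℝ _ _)) z :=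
        by have := (hgder (z,t)).comp z (hasFDerivAt_prodMk_left (𝕜 := ℝ) z t); exact this
      rw [H.fderiv]
      apply ContinuousLinearMap.ext
      intro v
      have hvexp : v = ∑ j, v j • (Pi.single j 1 : Fin 3 → ℝ) := by
        ext k
        simp [Pi.single_apply, Finset.sum_apply, mul_comm]
      rw [ContinuousLinearMap.comp_apply, ContinuousLinearMap.zero_apply]
      conv_lhs => rw [hvexp]
      rw [map_sum, map_sum]
      apply Finset.sum_eq_zero
      intro j _
      rw [map_smul, map_smul]
      have : (inl ℝ (Fin 3 → ℝ) ℝ) (Pi.single j 1) = (Pi.single j 1, 0) := rfl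
      rw [this, hDg0 z t j, smul_zero]
  -- define f
  refine ⟨fun t => g (0, t), ?_, ?_⟩
  · intro x t
    show _ = g (0, t)
    have hgf : g (x, t) = g (0, t) := hgconst t x 0
    have hd : deriv (fun s => C x s) t = fderiv ℝ F (x,t) (0,1) := (slice2 x t).deriv
    have hf : fderiv ℝ (fun y => C y t) x (u x t)
        = fderiv ℝ F (x,t) (u x t, 0) := by
      have := (slice1 x t).fderiv
      rw [show (fun y => C y t) = fun y => F (y,t) from rfl, this]
      simp
    rw [hd, hf, ← hgf]
    show _ = fderiv ℝ F (x,t) (U (x,t), 1)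
    rw [show ((U (x,t), (1:ℝ)) : (Fin 3 → ℝ) × ℝ) = (0,1) + (u x t, 0) by
      simp [Prod.ext_iff, hUdef], map_add]
  · intro x t
    show deriv (fun s => C x s - ∫ r in (0:ℝ)..s, g (0, r)) t
        + fderiv ℝ (fun y => C y t - ∫ r in (0:ℝ)..t, g (0, r)) x (u x t) = 0
    -- continuity of f
    have hgcont : Continuous g :=
      hΦ.continuous.clm_apply (hu.continuous.prodMk continuous_const)
    have hfc : Continuous (fun t => g (0, t)) :=
      hgcont.comp (continuous_const.prodMk continuous_id)
    have hI : HasDerivAt (fun s => ∫ r in (0:ℝ)..s, g (0, r)) (g (0, t)) t :=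
      intervalIntegral.integral_hasDerivAt_right (hfc.intervalIntegrable 0 t)
        (hfc.stronglyMeasurableAtFilter _ _) hfc.continuousAt
    have hd : HasDerivAt (fun s => C x s - ∫ r in (0:ℝ)..s, g (0, r))
        (fderiv ℝ F (x,t) (0,1) - g (0, t)) t := (slice2 x t).sub hI
    rw [hd.deriv, fderiv_sub_const]
    have hf : fderiv ℝ (fun y => C y t) x (u x t)
        = fderiv ℝ F (x,t) (u x t, 0) := by
      have := (slice1 x t).fderiv
      rw [show (fun y => C y t) = fun y => F (y,t) from rfl, this]
      simp
    rw [hf]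
    have hgf : g (x, t) = g (0, t) := hgconst t x 0
    have hsum : fderiv ℝ F (x,t) (0,1) + fderiv ℝ F (x,t) (u x t, 0) = g (x,t) := by
      show _ = fderiv ℝ F (x,t) (U (x,t), 1)
      rw [show ((U (x,t), (1:ℝ)) : (Fin 3 → ℝ) × ℝ) = (0,1) + (u x t, 0) by
        simp [Prod.ext_iff, hUdef], map_add]
    rw [hgf] at hsum
    linarith
end

section
/- Let u : ℝ³ × ℝ → ℝ³ be a C¹ divergence-free vector field and let η₁ : ℝ³ × ℝ → ℝ³ be a C¹ infinitesimal contemporaneous symmetry of u with η₁(x,t) ≠ 0 for all (x,t). Let K : ℝ³ × ℝ → ℝ be a C¹ scalar function such that η₂ := K·η₁ is also an infinitesimal contemporaneous symmetry of u. Then K is a constant of motion: ∂K/∂t + (u·∇)K = 0 at every (x,t). If in addition ∇·η₁ = 0 and ∇·(K·η₁) = 0 everywhere, then η₁·∇K = 0 everywhere. -/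
lemma clm_basis (L : (Fin 3 → ℝ) →L[ℝ] ℝ) (v : Fin 3 → ℝ) :
    L v = ∑ i : Fin 3, v i * L (Pi.single i 1) := by
  have hv : v = ∑ i : Fin 3, v i • (Pi.single i 1 : Fin 3 → ℝ) := by
    funext j
    simp [Finset.sum_apply, Pi.single_apply]
  conv_lhs => rw [hv]
  rw [map_sum]
  simp [smul_eq_mul]

/-- If `η₁` is a nowhere-vanishing C¹ infinitesimal contemporaneous symmetry of
a C¹ divergence-free field `u`, and `K` is a C¹ scalar such that `K • η₁` is also an
infinitesimal contemporaneous symmetry of `u`, then `K` is a constant of motion; if moreover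
both `η₁` and `K • η₁` are divergence-free, then `η₁ · ∇K = 0` everywhere. -/
theorem stmt6 (u η₁ : (Fin 3 → ℝ) → ℝ → (Fin 3 → ℝ)) (K : (Fin 3 → ℝ) → ℝ → ℝ)
    (hu : ContDiff ℝ 1 fun p : (Fin 3 → ℝ) × ℝ => u p.1 p.2)
    (h1 : ContDiff ℝ 1 fun p : (Fin 3 → ℝ) × ℝ => η₁ p.1 p.2)
    (hK : ContDiff ℝ 1 fun p : (Fin 3 → ℝ) × ℝ => K p.1 p.2)
    (hdivu : ∀ (x : Fin 3 → ℝ) (t : ℝ), div3 (fun y => u y t) x = 0)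
    (hnz : ∀ (x : Fin 3 → ℝ) (t : ℝ), η₁ x t ≠ 0)
    (hs1 : ∀ (x : Fin 3 → ℝ) (t : ℝ),
      deriv (fun s => η₁ x s) t
        + fderiv ℝ (fun y => η₁ y t) x (u x t)
        - fderiv ℝ (fun y => u y t) x (η₁ x t) = 0)
    (hs2 : ∀ (x : Fin 3 → ℝ) (t : ℝ),
      deriv (fun s => K x s • η₁ x s) t
        + fderiv ℝ (fun y => K y t • η₁ y t) x (u x t)
        - fderiv ℝ (fun y => u y t) x (K x t • η₁ x t) = 0) :
    (∀ (x : Fin 3 → ℝ) (t : ℝ),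
      deriv (fun s => K x s) t + fderiv ℝ (fun y => K y t) x (u x t) = 0) ∧
    ((∀ (x : Fin 3 → ℝ) (t : ℝ), div3 (fun y => η₁ y t) x = 0) →
     (∀ (x : Fin 3 → ℝ) (t : ℝ), div3 (fun y => K y t • η₁ y t) x = 0) →
      ∀ (x : Fin 3 → ℝ) (t : ℝ), fderiv ℝ (fun y => K y t) x (η₁ x t) = 0) := by
  have hηxd : ∀ (x : Fin 3 → ℝ) (t : ℝ), DifferentiableAt ℝ (fun y => η₁ y t) x := by
    intro x t
    exact ((h1.differentiable one_ne_zero) (x, t)).comp x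
      (DifferentiableAt.prodMk (differentiableAt_fun_id : DifferentiableAt ℝ (fun y : Fin 3 → ℝ => y) x) (differentiableAt_const t))
  have hKxd : ∀ (x : Fin 3 → ℝ) (t : ℝ), DifferentiableAt ℝ (fun y => K y t) x := by
    intro x t
    exact ((hK.differentiable one_ne_zero) (x, t)).comp x
      (DifferentiableAt.prodMk (differentiableAt_fun_id : DifferentiableAt ℝ (fun y : Fin 3 → ℝ => y) x) (differentiableAt_const t))
  have hηtd : ∀ (x : Fin 3 → ℝ) (t : ℝ), DifferentiableAt ℝ (fun s => η₁ x s) t := by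
    intro x t
    exact ((h1.differentiable one_ne_zero) (x, t)).comp t
      (DifferentiableAt.prodMk (differentiableAt_const x) differentiableAt_id)
  have hKtd : ∀ (x : Fin 3 → ℝ) (t : ℝ), DifferentiableAt ℝ (fun s => K x s) t := by
    intro x t
    exact ((hK.differentiable one_ne_zero) (x, t)).comp t
      (DifferentiableAt.prodMk (differentiableAt_const x) differentiableAt_id)
  constructor
  · intro x t
    have e1 : deriv (fun s => K x s • η₁ x s) t
        = K x t • deriv (fun s => η₁ x s) t + deriv (fun s => K x s) t • η₁ x t :=
      deriv_smul (hKtd x t) (hηtd x t)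
    have e2 : fderiv ℝ (fun y => K y t • η₁ y t) x (u x t)
        = K x t • fderiv ℝ (fun y => η₁ y t) x (u x t)
          + (fderiv ℝ (fun y => K y t) x (u x t)) • η₁ x t := by
      rw [fderiv_fun_smul (hKxd x t) (hηxd x t)]
      simp
    have e3 : fderiv ℝ (fun y => u y t) x (K x t • η₁ x t)
        = K x t • fderiv ℝ (fun y => u y t) x (η₁ x t) :=
      (fderiv ℝ (fun y => u y t) x).map_smul _ _
    have h2 := hs2 x t
    rw [e1, e2, e3] at h2
    have h1' := hs1 x t
    have key : (deriv (fun s => K x s) t + fderiv ℝ (fun y => K y t) x (u x t)) • η₁ x t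
        = 0 := by
      calc (deriv (fun s => K x s) t + fderiv ℝ (fun y => K y t) x (u x t)) • η₁ x t
          = (K x t • deriv (fun s => η₁ x s) t + deriv (fun s => K x s) t • η₁ x t
              + (K x t • fderiv ℝ (fun y => η₁ y t) x (u x t)
                + (fderiv ℝ (fun y => K y t) x (u x t)) • η₁ x t)
              - K x t • fderiv ℝ (fun y => u y t) x (η₁ x t))
            - K x t • (deriv (fun s => η₁ x s) t
              + fderiv ℝ (fun y => η₁ y t) x (u x t)
              - fderiv ℝ (fun y => u y t) x (η₁ x t)) := by module
        _ = 0 := by rw [h2, h1']; simp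
    rcases smul_eq_zero.mp key with h | h
    · exact h
    · exact absurd h (hnz x t)
  · intro hdiv1 hdiv2 x t
    have e : div3 (fun y => K y t • η₁ y t) x
        = fderiv ℝ (fun y => K y t) x (η₁ x t) + K x t * div3 (fun y => η₁ y t) x := by
      unfold div3
      have hterm : ∀ i : Fin 3, fderiv ℝ (fun y => K y t • η₁ y t) x (Pi.single i 1) i
          = η₁ x t i * fderiv ℝ (fun y => K y t) x (Pi.single i 1)
            + K x t * fderiv ℝ (fun y => η₁ y t) x (Pi.single i 1) i := by
        intro i
        rw [fderiv_fun_smul (hKxd x t) (hηxd x t)]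
        simp [mul_comm]
        ring
      rw [Finset.sum_congr rfl (fun i _ => hterm i), Finset.sum_add_distrib,
        ← Finset.mul_sum, clm_basis]
    have h0 := hdiv2 x t
    rw [e, hdiv1 x t] at h0
    linarith
end

section
/- Let λ ∈ ℝ with λ ≠ −1, let I ⊆ ℝ be an interval, and let φ, g : I → ℝ with g differentiable and A : I → ℝ twice differentiable, satisfying on I the linear equation A''(t) = (λ+1)(λ+2)φ(t)A(t) and the Riccati equation g'(t) = (λ+2)φ(t) − (λ+1)g(t)². Define B(t) := A(t)g(t) − A'(t)/(λ+1). Then B'(t) = −(λ+1) g(t) B(t) for all t ∈ I; consequently, if B(t) > 0 on I, the function f(t) := B(t)^{−1/(λ+1)} satisfies f'(t) = g(t) f(t) on I. -/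
/-- With `A'' = (λ+1)(λ+2)φA` and the Riccati equation
`g' = (λ+2)φ − (λ+1)g²` on an interval `I`, the function `B := A g − A'/(λ+1)` satisfies
`B' = −(λ+1) g B` on `I`; consequently, if `B > 0` on `I` then `f := B^(−1/(λ+1))`
satisfies `f' = g f` on `I`. -/
theorem stmt9 (lam : ℝ) (hlam : lam ≠ -1)
    (I : Set ℝ) (hI : I.OrdConnected)
    (φ g A A' : ℝ → ℝ)
    (hA : ∀ t ∈ I, HasDerivAt A (A' t) t)
    (hA' : ∀ t ∈ I, HasDerivAt A' ((lam + 1) * (lam + 2) * φ t * A t) t)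
    (hg : ∀ t ∈ I, HasDerivAt g ((lam + 2) * φ t - (lam + 1) * (g t) ^ 2) t) :
    (∀ t ∈ I,
      HasDerivAt (fun s => A s * g s - A' s / (lam + 1))
        (-(lam + 1) * g t * (A t * g t - A' t / (lam + 1))) t) ∧
    ((∀ t ∈ I, 0 < A t * g t - A' t / (lam + 1)) →
      ∀ t ∈ I,
        HasDerivAt (fun s => (A s * g s - A' s / (lam + 1)) ^ (-1 / (lam + 1) : ℝ))
          (g t * (A t * g t - A' t / (lam + 1)) ^ (-1 / (lam + 1) : ℝ)) t) := by
  have hlam' : lam + 1 ≠ 0 := by intro h; apply hlam; linarith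
  have hB : ∀ t ∈ I,
      HasDerivAt (fun s => A s * g s - A' s / (lam + 1))
        (-(lam + 1) * g t * (A t * g t - A' t / (lam + 1))) t := by
    intro t ht
    have h := ((hA t ht).mul (hg t ht)).sub ((hA' t ht).div_const (lam + 1))
    refine h.congr_deriv ?_
    field_simp
    ring
  refine ⟨hB, fun hpos t ht => ?_⟩
  have hBt := hpos t ht
  have h := (hB t ht).rpow_const (p := -1 / (lam + 1)) (Or.inl (ne_of_gt hBt))
  convert h using 1
  set B := A t * g t - A' t / (lam + 1)
  have key : B ^ (-1 / (lam + 1) : ℝ) = B ^ (-1 / (lam + 1) - 1 : ℝ) * B := by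
    rw [← Real.rpow_add_one (ne_of_gt hBt)]; ring_nf
  rw [key]
  have : -(lam + 1) * (-1 / (lam + 1)) = 1 := by field_simp
  calc g t * (B ^ (-1 / (lam + 1) - 1 : ℝ) * B)
      = (-(lam + 1) * (-1 / (lam + 1))) * (g t * (B ^ (-1 / (lam + 1) - 1 : ℝ) * B)) := by
        rw [this]; ring
    _ = -(lam + 1) * g t * B * (-1 / (lam + 1)) * B ^ (-1 / (lam + 1) - 1 : ℝ) := by ring
end

section
/- Let λ ∈ ℝ with λ ≠ −1, let I ⊆ ℝ be an interval, and let φ, g, h : I → ℝ with g, h differentiable and A : I → ℝ twice differentiable, satisfying on I: A''(t) = (λ+1)(λ+2)φ(t)A(t), g'(t) = (λ+2)φ(t) − (λ+1)g(t)², and h'(t) = g(t)h(t). Assume B(t) := A(t)g(t) − A'(t)/(λ+1) > 0 on I. Then the function t ↦ h(t)·B(t)^{1/(λ+1)} is constant on I. -/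
/-- With `A'' = (λ+1)(λ+2)φA`, the Riccati equation `g' = (λ+2)φ − (λ+1)g²`,
and `h' = g h` on an interval `I`, if `B := A g − A'/(λ+1) > 0` on `I`, then
`t ↦ h(t) · B(t)^(1/(λ+1))` is constant on `I`. -/
theorem stmt10 (lam : ℝ) (hlam : lam ≠ -1)
    (I : Set ℝ) (hI : I.OrdConnected)
    (φ g h A A' : ℝ → ℝ)
    (hA : ∀ t ∈ I, HasDerivAt A (A' t) t)
    (hA' : ∀ t ∈ I, HasDerivAt A' ((lam + 1) * (lam + 2) * φ t * A t) t)
    (hg : ∀ t ∈ I, HasDerivAt g ((lam + 2) * φ t - (lam + 1) * (g t) ^ 2) t)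
    (hh : ∀ t ∈ I, HasDerivAt h (g t * h t) t)
    (hB : ∀ t ∈ I, 0 < A t * g t - A' t / (lam + 1)) :
    ∀ t₁ ∈ I, ∀ t₂ ∈ I,
      h t₁ * (A t₁ * g t₁ - A' t₁ / (lam + 1)) ^ (1 / (lam + 1) : ℝ)
        = h t₂ * (A t₂ * g t₂ - A' t₂ / (lam + 1)) ^ (1 / (lam + 1) : ℝ) := by
  have hl1 : lam + 1 ≠ 0 := by
    intro hc; apply hlam; linarith
  set p : ℝ := 1 / (lam + 1) with hp
  set B : ℝ → ℝ := fun t => A t * g t - A' t / (lam + 1) with hBdef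
  set F : ℝ → ℝ := fun t => h t * B t ^ p with hFdef
  have key : ∀ t ∈ I, HasDerivAt F 0 t := by
    intro t ht
    have hBpos : 0 < B t := hB t ht
    have hdB : HasDerivAt B (-(lam + 1) * g t * B t) t := by
      have := ((hA t ht).mul (hg t ht)).sub ((hA' t ht).div_const (lam + 1))
      convert this using 1
      · rfl
      · rfl
      · rfl
      simp only [hBdef]
      field_simp
      ring
    have hdBp : HasDerivAt (fun s => B s ^ p)
        ((-(lam + 1) * g t * B t) * p * B t ^ (p - 1)) t :=
      hdB.rpow_const (Or.inl (ne_of_gt hBpos))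
    have hdF : HasDerivAt F (g t * h t * B t ^ p +
        h t * ((-(lam + 1) * g t * B t) * p * B t ^ (p - 1))) t :=
      (hh t ht).mul hdBp
    convert hdF using 1
    have hBp : B t ^ (p - 1) = B t ^ p / B t := by
      rw [Real.rpow_sub hBpos, Real.rpow_one]
    rw [hBp, hp]
    field_simp
    ring
  have main : ∀ a ∈ I, ∀ b ∈ I, a ≤ b → F a = F b := by
    intro a ha b hb hab
    have hsub : Set.Icc a b ⊆ I := hI.out ha hb
    have := constant_of_has_deriv_right_zero
      (f := F) (a := a) (b := b)
      (fun x hx => ((key x (hsub hx)).continuousAt).continuousWithinAt)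
      (fun x hx => ((key x (hsub (Set.mem_Icc_of_Ico hx))).hasDerivWithinAt))
    exact (this b (Set.right_mem_Icc.2 hab)).symm
  intro t₁ ht₁ t₂ ht₂
  rcases le_total t₁ t₂ with hle | hle
  · exact main t₁ ht₁ t₂ ht₂ hle
  · exact (main t₂ ht₂ t₁ ht₁ hle).symm
end

section
/- Let λ ∈ ℝ with λ ≠ −1, let I ⊆ ℝ be an interval containing 0, and let φ, g : I → ℝ with g differentiable and A : I → ℝ twice differentiable, satisfying on I: A''(t) = (λ+1)(λ+2)φ(t)A(t) and g'(t) = (λ+2)φ(t) − (λ+1)g(t)². Assume A(t) ≠ 0 and B(t) := A(t)g(t) − A'(t)/(λ+1) ≠ 0 for all t ∈ I. Then the function t ↦ 1/(A(t)B(t)) − (λ+1)∫₀ᵗ A(s)⁻² ds is constant on I. -/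
/-- With `A'' = (λ+1)(λ+2)φA` and the Riccati equation
`g' = (λ+2)φ − (λ+1)g²` on an interval `I` containing `0`, if `A ≠ 0` and
`B := A g − A'/(λ+1) ≠ 0` on `I`, then `t ↦ 1/(A(t)B(t)) − (λ+1)∫₀ᵗ A(s)⁻² ds`
is constant on `I`. -/
theorem stmt11 (lam : ℝ) (hlam : lam ≠ -1)
    (I : Set ℝ) (hI : I.OrdConnected) (h0 : (0:ℝ) ∈ I)
    (φ g A A' : ℝ → ℝ)
    (hA : ∀ t ∈ I, HasDerivAt A (A' t) t)
    (hA' : ∀ t ∈ I, HasDerivAt A' ((lam + 1) * (lam + 2) * φ t * A t) t)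
    (hg : ∀ t ∈ I, HasDerivAt g ((lam + 2) * φ t - (lam + 1) * (g t) ^ 2) t)
    (hAne : ∀ t ∈ I, A t ≠ 0)
    (hBne : ∀ t ∈ I, A t * g t - A' t / (lam + 1) ≠ 0) :
    ∀ t₁ ∈ I, ∀ t₂ ∈ I,
      1 / (A t₁ * (A t₁ * g t₁ - A' t₁ / (lam + 1)))
          - (lam + 1) * ∫ s in (0:ℝ)..t₁, 1 / (A s) ^ 2
        = 1 / (A t₂ * (A t₂ * g t₂ - A' t₂ / (lam + 1)))
          - (lam + 1) * ∫ s in (0:ℝ)..t₂, 1 / (A s) ^ 2 := by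
  have hl1 : lam + 1 ≠ 0 := by
    intro h; apply hlam; linarith
  -- continuity of the integrand on I
  have contA : ContinuousOn A I := fun x hx => (hA x hx).continuousAt.continuousWithinAt
  have contf : ContinuousOn (fun s => 1 / (A s) ^ 2) I :=
    continuousOn_const.div (contA.pow 2) (fun s hs => pow_ne_zero 2 (hAne s hs))
  -- derivative of H = 1/(A*B) on I
  have key : ∀ x ∈ I,
      HasDerivAt (fun t => 1 / (A t * (A t * g t - A' t / (lam + 1))))
        ((lam + 1) * (1 / (A x) ^ 2)) x := by
    intro x hx
    have hBd : HasDerivAt (fun t => A t * g t - A' t / (lam + 1))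
        (A' x * g x + A x * ((lam + 2) * φ x - (lam + 1) * (g x) ^ 2)
          - (lam + 1) * (lam + 2) * φ x * A x / (lam + 1)) x :=
      ((hA x hx).mul (hg x hx)).sub ((hA' x hx).div_const _)
    have hABd : HasDerivAt (fun t => A t * (A t * g t - A' t / (lam + 1)))
        (A' x * (A x * g x - A' x / (lam + 1))
          + A x * (A' x * g x + A x * ((lam + 2) * φ x - (lam + 1) * (g x) ^ 2)
              - (lam + 1) * (lam + 2) * φ x * A x / (lam + 1))) x :=
      (hA x hx).mul hBd
    have hne : A x * (A x * g x - A' x / (lam + 1)) ≠ 0 :=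
      mul_ne_zero (hAne x hx) (hBne x hx)
    have hd : A' x * (A x * g x - A' x / (lam + 1))
          + A x * (A' x * g x + A x * ((lam + 2) * φ x - (lam + 1) * (g x) ^ 2)
              - (lam + 1) * (lam + 2) * φ x * A x / (lam + 1))
        = -((lam + 1) * (A x * g x - A' x / (lam + 1)) ^ 2) := by
      field_simp
      ring
    rw [hd] at hABd
    have hinv := hABd.inv hne
    simp only [one_div]
    convert hinv using 1
    have hA0 := hAne x hx
    have hB0 := hBne x hx
    generalize (A x * g x - A' x / (lam + 1)) = b at hB0 ⊢
    any_goals rfl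
    rw [neg_neg, mul_pow, mul_div_mul_right _ _ (pow_ne_zero 2 (hBne x hx))]
    ring
  intro t₁ ht₁ t₂ ht₂
  have hsub : ∀ a ∈ I, ∀ b ∈ I, Set.uIcc a b ⊆ I := fun a ha b hb => hI.uIcc_subset ha hb
  have hint : ∀ a ∈ I, ∀ b ∈ I, IntervalIntegrable (fun s => 1 / (A s) ^ 2)
      MeasureTheory.volume a b := fun a ha b hb =>
    (contf.mono (hsub a ha b hb)).intervalIntegrable
  -- FTC on t₁..t₂
  have hftc : ∫ s in t₁..t₂, (lam + 1) * (1 / (A s) ^ 2)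
      = 1 / (A t₂ * (A t₂ * g t₂ - A' t₂ / (lam + 1)))
        - 1 / (A t₁ * (A t₁ * g t₁ - A' t₁ / (lam + 1))) := by
    apply intervalIntegral.integral_eq_sub_of_hasDerivAt
    · intro x hxI
      exact key x (hsub t₁ ht₁ t₂ ht₂ hxI)
    · exact ((hint t₁ ht₁ t₂ ht₂).const_mul _)
  have hadd : (∫ s in (0:ℝ)..t₁, 1 / (A s) ^ 2) + ∫ s in t₁..t₂, 1 / (A s) ^ 2
      = ∫ s in (0:ℝ)..t₂, 1 / (A s) ^ 2 :=
    intervalIntegral.integral_add_adjacent_intervals (hint 0 h0 t₁ ht₁) (hint t₁ ht₁ t₂ ht₂)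
  rw [intervalIntegral.integral_const_mul] at hftc
  have : (lam + 1) * ∫ s in (0:ℝ)..t₂, 1 / (A s) ^ 2
      = (lam + 1) * (∫ s in (0:ℝ)..t₁, 1 / (A s) ^ 2)
        + (1 / (A t₂ * (A t₂ * g t₂ - A' t₂ / (lam + 1)))
            - 1 / (A t₁ * (A t₁ * g t₁ - A' t₁ / (lam + 1)))) := by
    rw [← hadd, mul_add, hftc]
  linarith
end

section
/- Let λ ∈ ℝ with λ ≠ −1 and T > 0. Let φ : [0,T) → ℝ be continuous, let A : [0,T) → ℝ be twice differentiable with A''(t) = (λ+1)(λ+2)φ(t)A(t), A(0) = 1, A'(0) = 0, and A(t) > 0 for all t ∈ [0,T), and set S(t) := ∫₀ᵗ A(s)⁻² ds. Let g : [0,T) → ℝ be differentiable with g'(t) = (λ+2)φ(t) − (λ+1)g(t)² and g(0) = g₀, and assume 1 + (λ+1)g₀S(t) > 0 for all t ∈ [0,T). Then for all t ∈ [0,T): g(t) = g₀ / (A(t)²(1 + (λ+1)g₀S(t))) + A'(t)/((λ+1)A(t)). -/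
open Set MeasureTheory intervalIntegral

/-- Explicit integration of the stretching rate along pathlines. With
`A'' = (λ+1)(λ+2)φA`, `A(0)=1`, `A'(0)=0`, `A>0` on `[0,T)`, `S(t) := ∫₀ᵗ A(s)⁻² ds`,
and `g` solving the Riccati equation `g' = (λ+2)φ − (λ+1)g²` with `g(0) = g₀`, if
`1 + (λ+1)g₀S(t) > 0` on `[0,T)` then
`g(t) = g₀/(A(t)²(1 + (λ+1)g₀S(t))) + A'(t)/((λ+1)A(t))` on `[0,T)`. -/
theorem stmt12 (lam : ℝ) (hlam : lam ≠ -1) (T : ℝ) (hT : 0 < T)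
    (φ g A A' : ℝ → ℝ) (g0 : ℝ)
    (hφ : ContinuousOn φ (Set.Ico 0 T))
    (hA : ∀ t ∈ Set.Ico (0:ℝ) T, HasDerivWithinAt A (A' t) (Set.Ico 0 T) t)
    (hA' : ∀ t ∈ Set.Ico (0:ℝ) T,
      HasDerivWithinAt A' ((lam + 1) * (lam + 2) * φ t * A t) (Set.Ico 0 T) t)
    (hA0 : A 0 = 1) (hA'0 : A' 0 = 0)
    (hApos : ∀ t ∈ Set.Ico (0:ℝ) T, 0 < A t)
    (hg : ∀ t ∈ Set.Ico (0:ℝ) T,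
      HasDerivWithinAt g ((lam + 2) * φ t - (lam + 1) * (g t) ^ 2) (Set.Ico 0 T) t)
    (hg0 : g 0 = g0)
    (hpos : ∀ t ∈ Set.Ico (0:ℝ) T,
      0 < 1 + (lam + 1) * g0 * ∫ s in (0:ℝ)..t, 1 / (A s) ^ 2) :
    ∀ t ∈ Set.Ico (0:ℝ) T,
      g t = g0 / ((A t) ^ 2 * (1 + (lam + 1) * g0 * ∫ s in (0:ℝ)..t, 1 / (A s) ^ 2))
            + A' t / ((lam + 1) * A t) := by
  have hl1 : lam + 1 ≠ 0 := fun h => hlam (by linarith)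
  set c : ℝ := (lam + 1) * g0 with hc
  set S : ℝ → ℝ := fun t => ∫ s in (0:ℝ)..t, 1 / (A s) ^ 2 with hS
  set h : ℝ → ℝ := fun t =>
    g0 / ((A t) ^ 2 * (1 + c * S t)) + A' t / ((lam + 1) * A t) with hh
  -- continuity of the integrand
  have hAcont : ContinuousOn A (Ico 0 T) := fun t ht => (hA t ht).continuousWithinAt
  have hA'cont : ContinuousOn A' (Ico 0 T) := fun t ht => (hA' t ht).continuousWithinAt
  have hgcont : ContinuousOn g (Ico 0 T) := fun t ht => (hg t ht).continuousWithinAt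
  have hAne : ∀ t ∈ Ico (0:ℝ) T, A t ≠ 0 := fun t ht => (hApos t ht).ne'
  have hfcont : ContinuousOn (fun s => 1 / (A s) ^ 2) (Ico 0 T) := by
    apply ContinuousOn.div continuousOn_const (hAcont.pow 2)
    intro t ht; exact pow_ne_zero 2 (hAne t ht)
  -- fix t0 ∈ [0, T)
  intro t0 ht0
  obtain ⟨ht00, ht0T⟩ := ht0
  have hIccsub : Icc (0:ℝ) t0 ⊆ Ico 0 T := fun s hs => ⟨hs.1, lt_of_le_of_lt hs.2 ht0T⟩
  -- S derivative within Ici t, for t ∈ [0, T)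
  have hSder : ∀ t ∈ Ico (0:ℝ) T, HasDerivWithinAt S (1 / (A t) ^ 2) (Ici t) t := by
    intro t ht
    have hsub : Icc (0:ℝ) t ⊆ Ico 0 T := fun s hs => ⟨hs.1, lt_of_le_of_lt hs.2 ht.2⟩
    have hint : IntervalIntegrable (fun s => 1 / (A s) ^ 2) volume 0 t := by
      apply ContinuousOn.intervalIntegrable
      rw [uIcc_of_le ht.1]
      exact hfcont.mono hsub
    have hmem : Ico (0:ℝ) T ∈ nhdsWithin t (Ioi t) := by
      apply mem_nhdsWithin.2 ⟨Iio T, isOpen_Iio, ht.2, ?_⟩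
      intro s hs; exact ⟨le_trans ht.1 (le_of_lt hs.2), hs.1⟩
    have hmeas : StronglyMeasurableAtFilter (fun s => 1 / (A s) ^ 2) (nhdsWithin t (Ioi t)) :=
      ⟨Ico 0 T, hmem, (hfcont.aestronglyMeasurable measurableSet_Ico)⟩
    have hcw : ContinuousWithinAt (fun s => 1 / (A s) ^ 2) (Ioi t) t :=
      ((hfcont t ht).mono_of_mem_nhdsWithin hmem)
    exact intervalIntegral.integral_hasDerivWithinAt_right hint hmeas hcw
  -- continuity of S on [0, t0]
  have hScont : ContinuousOn S (Icc 0 t0) := by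
    have hint : IntegrableOn (fun s => 1 / (A s) ^ 2) (uIcc 0 t0) volume := by
      rw [uIcc_of_le ht00]
      exact (hfcont.mono hIccsub).integrableOn_compact isCompact_Icc
    have := intervalIntegral.continuousOn_primitive_interval (μ := volume) hint
    rwa [uIcc_of_le ht00] at this
  -- mono_of_mem: derivatives within Ici t
  have hIciA : ∀ t ∈ Ico (0:ℝ) T, HasDerivWithinAt A (A' t) (Ici t) t := by
    intro t ht
    refine (hA t ht).mono_of_mem_nhdsWithin ?_
    apply mem_nhdsWithin.2 ⟨Iio T, isOpen_Iio, ht.2, ?_⟩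
    intro s hs; exact ⟨le_trans ht.1 hs.2, hs.1⟩
  have hIciA' : ∀ t ∈ Ico (0:ℝ) T,
      HasDerivWithinAt A' ((lam + 1) * (lam + 2) * φ t * A t) (Ici t) t := by
    intro t ht
    refine (hA' t ht).mono_of_mem_nhdsWithin ?_
    apply mem_nhdsWithin.2 ⟨Iio T, isOpen_Iio, ht.2, ?_⟩
    intro s hs; exact ⟨le_trans ht.1 hs.2, hs.1⟩
  have hIcig : ∀ t ∈ Ico (0:ℝ) T,
      HasDerivWithinAt g ((lam + 2) * φ t - (lam + 1) * (g t) ^ 2) (Ici t) t := by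
    intro t ht
    refine (hg t ht).mono_of_mem_nhdsWithin ?_
    apply mem_nhdsWithin.2 ⟨Iio T, isOpen_Iio, ht.2, ?_⟩
    intro s hs; exact ⟨le_trans ht.1 hs.2, hs.1⟩
  -- positivity of 1 + c S t
  have hQpos : ∀ t ∈ Ico (0:ℝ) T, 0 < 1 + c * S t := fun t ht => hpos t ht
  -- derivative of h
  have hhder : ∀ t ∈ Ico (0:ℝ) T,
      HasDerivWithinAt h ((lam + 2) * φ t - (lam + 1) * (h t) ^ 2) (Ici t) t := by
    intro t ht
    have hAne' : A t ≠ 0 := hAne t ht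
    have hQne : 1 + c * S t ≠ 0 := (hQpos t ht).ne'
    have hPne : (A t) ^ 2 * (1 + c * S t) ≠ 0 := mul_ne_zero (pow_ne_zero 2 hAne') hQne
    have hP : HasDerivWithinAt (fun t => (A t) ^ 2 * (1 + c * S t))
        (2 * A t * A' t * (1 + c * S t) + (A t) ^ 2 * (c * (1 / (A t) ^ 2))) (Ici t) t := by
      have h1 : HasDerivWithinAt (fun t => (A t) ^ 2) (2 * A t * A' t) (Ici t) t := by
        have := (hIciA t ht).fun_pow 2
        simpa [mul_comm, mul_assoc, mul_left_comm] using this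
      have h2 : HasDerivWithinAt (fun t => 1 + c * S t) (c * (1 / (A t) ^ 2)) (Ici t) t :=
        ((hSder t ht).const_mul c).const_add 1
      exact h1.mul h2
    have hfirst : HasDerivWithinAt (fun t => g0 / ((A t) ^ 2 * (1 + c * S t)))
        (-(g0 * (2 * A t * A' t * (1 + c * S t) + (A t) ^ 2 * (c * (1 / (A t) ^ 2)))) /
          ((A t) ^ 2 * (1 + c * S t)) ^ 2) (Ici t) t := by
      have := (hasDerivWithinAt_const t (Ici t) g0).fun_div hP hPne
      simpa using this
    have hsecond : HasDerivWithinAt (fun t => A' t / ((lam + 1) * A t))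
        (((lam + 1) * (lam + 2) * φ t * A t * ((lam + 1) * A t) -
          A' t * ((lam + 1) * A' t)) / ((lam + 1) * A t) ^ 2) (Ici t) t := by
      exact (hIciA' t ht).div ((hIciA t ht).const_mul (lam + 1))
        (mul_ne_zero hl1 hAne')
    have := hfirst.fun_add hsecond
    refine this.congr_deriv (Eq.symm ?_)
    show (lam + 2) * φ t - (lam + 1) * (h t) ^ 2 = _
    rw [hh]
    field_simp
    ring
  -- w := g - h
  have hw0 : g 0 - h 0 = 0 := by
    have hS0 : S 0 = 0 := intervalIntegral.integral_same
    rw [hg0, hh]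
    simp [hS0, hA0, hA'0]
  -- continuity of h on [0, t0]
  have hhcont : ContinuousOn h (Icc 0 t0) := by
    rw [hh]
    apply ContinuousOn.add
    · apply ContinuousOn.div continuousOn_const
      · exact ((hAcont.mono hIccsub).pow 2).mul
          (continuousOn_const.add (hScont.const_smul c))
      · intro t ht
        exact mul_ne_zero (pow_ne_zero 2 (hAne t (hIccsub ht))) (hQpos t (hIccsub ht)).ne'
    · apply ContinuousOn.div (hA'cont.mono hIccsub)
        ((hAcont.mono hIccsub).const_smul (lam + 1))
      intro t ht
      exact mul_ne_zero hl1 (hAne t (hIccsub ht))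
  have hwcont : ContinuousOn (fun t => g t - h t) (Icc 0 t0) :=
    (hgcont.mono hIccsub).sub hhcont
  -- derivative of w
  have hwder : ∀ t ∈ Ico (0:ℝ) t0,
      HasDerivWithinAt (fun t => g t - h t)
        (-((lam + 1) * (g t + h t)) * (g t - h t)) (Ici t) t := by
    intro t ht
    have ht' : t ∈ Ico (0:ℝ) T := ⟨ht.1, lt_trans ht.2 ht0T⟩
    have := (hIcig t ht').fun_sub (hhder t ht')
    refine this.congr_deriv (Eq.symm ?_)
    ring
  -- bound for the coefficient
  obtain ⟨K, hK⟩ : ∃ K, ∀ t ∈ Icc (0:ℝ) t0, ‖(lam + 1) * (g t + h t)‖ ≤ K := by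
    obtain ⟨K, hK⟩ := isCompact_Icc.exists_bound_of_continuousOn
      (((hgcont.mono hIccsub).add hhcont).const_smul (lam + 1))
    exact ⟨K, fun t ht => by simpa using hK t ht⟩
  -- Gronwall
  have hgron := norm_le_gronwallBound_of_norm_deriv_right_le (δ := 0) (K := K) (ε := 0)
    hwcont hwder (by simp [hw0]) (fun t ht => by
      rw [norm_mul, norm_neg]
      have h1 : ‖(lam + 1) * (g t + h t)‖ ≤ K := hK t ⟨ht.1, le_of_lt ht.2⟩
      have h2 : (0:ℝ) ≤ ‖g t - h t‖ := norm_nonneg _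
      nlinarith [norm_nonneg ((lam + 1) * (g t + h t))])
  have := hgron t0 ⟨ht00, le_refl t0⟩
  rw [gronwallBound_ε0] at this
  simp only [zero_mul] at this
  have hzero : g t0 - h t0 = 0 := by
    have := le_antisymm this (norm_nonneg _)
    exact norm_eq_zero.1 this
  have : g t0 = h t0 := by linarith
  rw [this, hh]
end

section
/- Let λ ∈ ℝ with λ ≠ −1 and T > 0. Let φ : [0,T) → ℝ be continuous, let A : [0,T) → ℝ be twice differentiable with A''(t) = (λ+1)(λ+2)φ(t)A(t), A(0) = 1, A'(0) = 0, and A(t) > 0 for all t ∈ [0,T), and set S(t) := ∫₀ᵗ A(s)⁻² ds. Let g : [0,T) → ℝ be differentiable with g'(t) = (λ+2)φ(t) − (λ+1)g(t)², g(0) = g₀, and assume 1 + (λ+1)g₀S(t) > 0 for all t ∈ [0,T). Let h : [0,T) → ℝ be differentiable with h'(t) = g(t)h(t) and h(0) = h₀. Then for all t ∈ [0,T): h(t) = h₀·[A(t)(1 + (λ+1)g₀S(t))]^{1/(λ+1)}. -/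
open Set MeasureTheory intervalIntegral

/-- FTC: derivative of `t ↦ ∫₀ᵗ f` within `Ico 0 T` for `f` continuous on `Ico 0 T`. -/
lemma my_ftc {T : ℝ} {f : ℝ → ℝ} (hf : ContinuousOn f (Set.Ico 0 T)) {x : ℝ}
    (hx : x ∈ Set.Ico (0:ℝ) T) :
    HasDerivWithinAt (fun u => ∫ s in (0:ℝ)..u, f s) (f x) (Set.Ico 0 T) x := by
  have hxT : x ∈ Set.Icc (0:ℝ) T := ⟨hx.1, hx.2.le⟩
  haveI : Fact (x ∈ Set.Icc (0:ℝ) T) := ⟨hxT⟩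
  have hmem : Set.Ico (0:ℝ) T ∈ nhdsWithin x (Set.Icc (0:ℝ) T) := by
    refine mem_nhdsWithin.mpr ⟨Set.Iio T, isOpen_Iio, hx.2, ?_⟩
    intro y hy
    exact ⟨hy.2.1, hy.1⟩
  have hint : IntervalIntegrable f volume 0 x := by
    apply ContinuousOn.intervalIntegrable
    apply hf.mono
    rw [Set.uIcc_of_le hx.1]
    exact fun y hy => ⟨hy.1, lt_of_le_of_lt hy.2 hx.2⟩
  have hmeas : StronglyMeasurableAtFilter f (nhdsWithin x (Set.Icc (0:ℝ) T)) volume :=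
    ⟨Set.Ico 0 T, hmem, hf.aestronglyMeasurable measurableSet_Ico⟩
  have hcont : ContinuousWithinAt f (Set.Icc (0:ℝ) T) x :=
    (hf x hx).mono_of_mem_nhdsWithin hmem
  exact (intervalIntegral.integral_hasDerivWithinAt_right hint hmeas hcont).mono
    Set.Ico_subset_Icc_self

/-- A function with zero derivative on `Ico 0 T` is constant. -/
lemma my_const {T : ℝ} {f : ℝ → ℝ}
    (hf : ∀ x ∈ Set.Ico (0:ℝ) T, HasDerivWithinAt f 0 (Set.Ico 0 T) x)
    (hT : 0 < T) {t : ℝ} (ht : t ∈ Set.Ico (0:ℝ) T) : f t = f 0 := by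
  have h0 : (0:ℝ) ∈ Set.Ico (0:ℝ) T := ⟨le_refl _, hT⟩
  have key := Convex.norm_image_sub_le_of_norm_hasDerivWithin_le
    (f' := fun _ => (0:ℝ)) (C := 0) hf (fun x _ => by simp) (convex_Ico 0 T) h0 ht
  simp only [zero_mul, norm_le_zero_iff, sub_eq_zero] at key
  exact key

/-- Uniqueness for the linear ODE `f' = c f` with `f 0 = 0` on `Ico 0 T`. -/
lemma my_linear_zero {T : ℝ} (hT : 0 < T) {c f : ℝ → ℝ}
    (hc : ContinuousOn c (Set.Ico 0 T))
    (hf : ∀ t ∈ Set.Ico (0:ℝ) T, HasDerivWithinAt f (c t * f t) (Set.Ico 0 T) t)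
    (h0 : f 0 = 0) : ∀ t ∈ Set.Ico (0:ℝ) T, f t = 0 := by
  intro t ht
  have key : ∀ x ∈ Set.Ico (0:ℝ) T,
      HasDerivWithinAt (fun y => f y * Real.exp (-(∫ s in (0:ℝ)..y, c s)))
        0 (Set.Ico 0 T) x := by
    intro x hx
    have h1 := (hf x hx).mul (((my_ftc hc hx).neg).exp)
    refine h1.congr_deriv ?_
    ring
  have hconst := my_const key hT ht
  rw [intervalIntegral.integral_same, h0, zero_mul] at hconst
  rcases mul_eq_zero.mp hconst with h | h
  · exact h
  · exact absurd h (Real.exp_ne_zero _)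

/-- Explicit integration of the out-of-plane vorticity along pathlines. With
`A'' = (λ+1)(λ+2)φA`, `A(0)=1`, `A'(0)=0`, `A>0` on `[0,T)`, `S(t) := ∫₀ᵗ A(s)⁻² ds`,
`g` solving the Riccati equation `g' = (λ+2)φ − (λ+1)g²` with `g(0) = g₀` and
`1 + (λ+1)g₀S(t) > 0` on `[0,T)`, any solution of `h' = g h`, `h(0) = h₀` satisfies
`h(t) = h₀ · [A(t)(1 + (λ+1)g₀S(t))]^(1/(λ+1))` on `[0,T)`. -/
theorem stmt13 (lam : ℝ) (hlam : lam ≠ -1) (T : ℝ) (hT : 0 < T)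
    (φ g h A A' : ℝ → ℝ) (g0 h0 : ℝ)
    (hφ : ContinuousOn φ (Set.Ico 0 T))
    (hA : ∀ t ∈ Set.Ico (0:ℝ) T, HasDerivWithinAt A (A' t) (Set.Ico 0 T) t)
    (hA' : ∀ t ∈ Set.Ico (0:ℝ) T,
      HasDerivWithinAt A' ((lam + 1) * (lam + 2) * φ t * A t) (Set.Ico 0 T) t)
    (hA0 : A 0 = 1) (hA'0 : A' 0 = 0)
    (hApos : ∀ t ∈ Set.Ico (0:ℝ) T, 0 < A t)
    (hg : ∀ t ∈ Set.Ico (0:ℝ) T,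
      HasDerivWithinAt g ((lam + 2) * φ t - (lam + 1) * (g t) ^ 2) (Set.Ico 0 T) t)
    (hg0 : g 0 = g0)
    (hpos : ∀ t ∈ Set.Ico (0:ℝ) T,
      0 < 1 + (lam + 1) * g0 * ∫ s in (0:ℝ)..t, 1 / (A s) ^ 2)
    (hh : ∀ t ∈ Set.Ico (0:ℝ) T, HasDerivWithinAt h (g t * h t) (Set.Ico 0 T) t)
    (hh0 : h 0 = h0) :
    ∀ t ∈ Set.Ico (0:ℝ) T,
      h t = h0 * (A t * (1 + (lam + 1) * g0 * ∫ s in (0:ℝ)..t, 1 / (A s) ^ 2))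
              ^ (1 / (lam + 1) : ℝ) := by
  have hl1 : lam + 1 ≠ 0 := fun hcon => hlam (by linarith)
  have h0I : (0:ℝ) ∈ Set.Ico (0:ℝ) T := ⟨le_refl _, hT⟩
  -- continuity facts
  have hAc : ContinuousOn A (Set.Ico 0 T) := fun t ht => (hA t ht).continuousWithinAt
  have hA'c : ContinuousOn A' (Set.Ico 0 T) := fun t ht => (hA' t ht).continuousWithinAt
  have hgc : ContinuousOn g (Set.Ico 0 T) := fun t ht => (hg t ht).continuousWithinAt
  have hAne : ∀ t ∈ Set.Ico (0:ℝ) T, A t ≠ 0 := fun t ht => (hApos t ht).ne'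
  have hinvc : ContinuousOn (fun t => 1 / (A t) ^ 2) (Set.Ico 0 T) := by
    exact ContinuousOn.div continuousOn_const (hAc.pow 2)
      (fun t ht => pow_ne_zero 2 (hAne t ht))
  -- S, u, B, B'
  set S : ℝ → ℝ := fun t => ∫ x in (0:ℝ)..t, 1 / (A x) ^ 2 with hSdef
  have hS : ∀ t ∈ Set.Ico (0:ℝ) T, HasDerivWithinAt S (1 / (A t) ^ 2) (Set.Ico 0 T) t :=
    fun t ht => my_ftc hinvc ht
  have hS0 : S 0 = 0 := intervalIntegral.integral_same
  set u : ℝ → ℝ := fun t => 1 + (lam + 1) * g0 * S t with hudef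
  have hupos : ∀ t ∈ Set.Ico (0:ℝ) T, 0 < u t := hpos
  have hu : ∀ t ∈ Set.Ico (0:ℝ) T,
      HasDerivWithinAt u ((lam + 1) * g0 * (1 / (A t) ^ 2)) (Set.Ico 0 T) t :=
    fun t ht => by
      exact ((hS t ht).const_mul ((lam + 1) * g0)).const_add 1
  set B : ℝ → ℝ := fun t => A t * u t with hBdef
  set B' : ℝ → ℝ := fun t => A' t * u t + (lam + 1) * g0 / A t with hB'def
  have hBpos : ∀ t ∈ Set.Ico (0:ℝ) T, 0 < B t := fun t ht =>
    mul_pos (hApos t ht) (hupos t ht)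
  have hBne : ∀ t ∈ Set.Ico (0:ℝ) T, B t ≠ 0 := fun t ht => (hBpos t ht).ne'
  have hB : ∀ t ∈ Set.Ico (0:ℝ) T, HasDerivWithinAt B (B' t) (Set.Ico 0 T) t := by
    intro t ht
    have h1 := (hA t ht).mul (hu t ht)
    refine h1.congr_deriv ?_
    simp only [hB'def]
    field_simp [hAne t ht]
  have hB'd : ∀ t ∈ Set.Ico (0:ℝ) T,
      HasDerivWithinAt B' ((lam + 1) * (lam + 2) * φ t * B t) (Set.Ico 0 T) t := by
    intro t ht
    have h1 := (hA' t ht).mul (hu t ht)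
    have h2 := (hasDerivWithinAt_const t (Set.Ico (0:ℝ) T) ((lam + 1) * g0)).div
      (hA t ht) (hAne t ht)
    have h3 := h1.add h2
    refine h3.congr_deriv ?_
    simp only [hBdef]
    field_simp [hAne t ht]
    ring
  -- G and its Riccati equation
  set G : ℝ → ℝ := fun t => B' t / ((lam + 1) * B t) with hGdef
  have hGd : ∀ t ∈ Set.Ico (0:ℝ) T,
      HasDerivWithinAt G ((lam + 2) * φ t - (lam + 1) * (G t) ^ 2) (Set.Ico 0 T) t := by
    intro t ht
    have hden : (lam + 1) * B t ≠ 0 := mul_ne_zero hl1 (hBne t ht)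
    have h1 := (hB'd t ht).div ((hB t ht).const_mul (lam + 1)) hden
    refine h1.congr_deriv ?_
    simp only [hGdef]
    field_simp [hBne t ht, hl1]
  have hG0 : G 0 = g0 := by
    simp only [hGdef, hB'def, hBdef, hudef, hS0, hA0, hA'0]
    field_simp
    ring
  -- g = G by uniqueness of the Riccati solution
  have hGc : ContinuousOn G (Set.Ico 0 T) := fun t ht => (hGd t ht).continuousWithinAt
  have hgG : ∀ t ∈ Set.Ico (0:ℝ) T, g t = G t := by
    have hcc : ContinuousOn (fun t => -(lam + 1) * (g t + G t)) (Set.Ico 0 T) :=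
      continuousOn_const.mul (hgc.add hGc)
    have hdz : ∀ t ∈ Set.Ico (0:ℝ) T,
        HasDerivWithinAt (fun y => g y - G y)
          ((-(lam + 1) * (g t + G t)) * (g t - G t)) (Set.Ico 0 T) t := by
      intro t ht
      have h1 := (hg t ht).sub (hGd t ht)
      refine h1.congr_deriv ?_
      ring
    have h0' : g 0 - G 0 = 0 := by rw [hg0, hG0, sub_self]
    intro t ht
    have := my_linear_zero hT hcc hdz h0' t ht
    linarith
  -- F = h0 * B ^ (1/(lam+1)) and its derivative
  have hF : ∀ t ∈ Set.Ico (0:ℝ) T,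
      HasDerivWithinAt (fun y => h0 * B y ^ ((1:ℝ) / (lam + 1)))
        (g t * (h0 * B t ^ ((1:ℝ) / (lam + 1)))) (Set.Ico 0 T) t := by
    intro t ht
    have h1 := ((hB t ht).rpow_const (p := (1:ℝ) / (lam + 1))
      (Or.inl (hBne t ht))).const_mul h0
    refine h1.congr_deriv ?_
    rw [hgG t ht]
    have hpow : B t ^ ((1:ℝ) / (lam + 1) - 1)
        = B t ^ ((1:ℝ) / (lam + 1)) / B t := by
      rw [Real.rpow_sub (hBpos t ht), Real.rpow_one]
    rw [hpow]
    simp only [hGdef]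
    field_simp [hBne t ht, hl1]
  have hF0 : h0 * B 0 ^ ((1:ℝ) / (lam + 1)) = h0 := by
    simp only [hBdef, hudef, hS0, hA0]
    norm_num
  -- h = F by uniqueness of the linear ODE
  have hhF : ∀ t ∈ Set.Ico (0:ℝ) T,
      h t = h0 * B t ^ ((1:ℝ) / (lam + 1)) := by
    have hdz : ∀ t ∈ Set.Ico (0:ℝ) T,
        HasDerivWithinAt (fun y => h y - h0 * B y ^ ((1:ℝ) / (lam + 1)))
          (g t * (h t - h0 * B t ^ ((1:ℝ) / (lam + 1)))) (Set.Ico 0 T) t := by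
      intro t ht
      have h1 := (hh t ht).sub (hF t ht)
      refine h1.congr_deriv ?_
      ring
    have h0' : h 0 - h0 * B 0 ^ ((1:ℝ) / (lam + 1)) = 0 := by
      rw [hh0, hF0, sub_self]
    intro t ht
    have := my_linear_zero hT hgc hdz h0' t ht
    linarith
  intro t ht
  have := hhF t ht
  simpa only [hBdef, hudef, hSdef] using this
end

section
/- Let λ ∈ ℝ with λ ≠ −1, and let γ₀ : ℝ² → ℝ be continuous, 2π-periodic in each variable, with torus mean ⟨γ₀⟩ = 0 and γ₀ not identically zero. Set γ₊ := max γ₀ and γ₋ := min γ₀ over [0,2π]², S* := −1/((λ+1)γ₊) if λ < −1 and S* := −1/((λ+1)γ₋) if λ > −1 (so S* > 0), and for S ∈ [0,S*) define G(S) := ⟨(1 + (λ+1)γ₀S)^{−1/(λ+1)}⟩^{−2(λ+1)}. Then G(S) > 0 for all S ∈ [0,S*); moreover, if T ∈ (0,∞] and S : [0,T) → ℝ is differentiable with S(0) = 0, S'(t) = G(S(t)) and 0 ≤ S(t) < S* for all t ∈ [0,T), and S(t) → S* as t → T⁻, then S is strictly increasing and T = ∫₀^{S*} G(S)⁻¹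 dS, as an equality of extended real numbers. -/
open Real MeasureTheory Topology Filter ENNReal

/-- The average of a `2π`-biperiodic function over the torus `[0,2π]²`. -/
noncomputable def tavg (f : ℝ × ℝ → ℝ) : ℝ :=
  (∫ p in Set.Icc (0:ℝ) (2*π) ×ˢ Set.Icc (0:ℝ) (2*π), f p) / (4 * π ^ 2)

set_option maxHeartbeats 1000000 in
/-- `G > 0` on `[0, S*)`; moreover, if `S` solves `S' = G(S)`, `S(0) = 0`,
on `[0,T)` (with `T ∈ (0,∞]`), stays in `[0,S*)` and tends to `S*` as `t → T⁻`, then `S`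
is strictly increasing and `T = ∫₀^{S*} G(s)⁻¹ ds` as extended real numbers. -/
theorem stmt15 (lam : ℝ) (hlam : lam ≠ -1)
    (γ0 : ℝ × ℝ → ℝ) (hcont : Continuous γ0)
    (hper1 : ∀ y : ℝ, Function.Periodic (fun x => γ0 (x, y)) (2*π))
    (hper2 : ∀ x : ℝ, Function.Periodic (fun y => γ0 (x, y)) (2*π))
    (hmean : tavg γ0 = 0) (hne : γ0 ≠ 0)
    (γp γm : ℝ)
    (hγp : IsGreatest (γ0 '' (Set.Icc (0:ℝ) (2*π) ×ˢ Set.Icc (0:ℝ) (2*π))) γp)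
    (hγm : IsLeast (γ0 '' (Set.Icc (0:ℝ) (2*π) ×ˢ Set.Icc (0:ℝ) (2*π))) γm)
    (Sstar : ℝ)
    (hSstar : Sstar = if lam < -1 then -1 / ((lam + 1) * γp) else -1 / ((lam + 1) * γm))
    (G : ℝ → ℝ)
    (hG : ∀ s ∈ Set.Ico 0 Sstar,
      G s = (tavg fun p => (1 + (lam + 1) * γ0 p * s) ^ (-1 / (lam + 1) : ℝ))
              ^ (-(2 * (lam + 1)) : ℝ)) :
    (∀ s ∈ Set.Ico 0 Sstar, 0 < G s) ∧
    (∀ (T : ℝ≥0∞), 0 < T → ∀ S : ℝ → ℝ, S 0 = 0 →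
      (∀ t ∈ {t : ℝ | 0 ≤ t ∧ ENNReal.ofReal t < T},
        HasDerivWithinAt S (G (S t)) {t : ℝ | 0 ≤ t ∧ ENNReal.ofReal t < T} t) →
      (∀ t ∈ {t : ℝ | 0 ≤ t ∧ ENNReal.ofReal t < T}, 0 ≤ S t ∧ S t < Sstar) →
      Filter.Tendsto S
        (if T = ⊤ then Filter.atTop else 𝓝[<] T.toReal) (𝓝 Sstar) →
      StrictMonoOn S {t : ℝ | 0 ≤ t ∧ ENNReal.ofReal t < T} ∧
        T = ∫⁻ s in Set.Ico (0:ℝ) Sstar, ENNReal.ofReal ((G s)⁻¹)) := by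
  have hpi : (0:ℝ) < π := Real.pi_pos
  set K : Set (ℝ × ℝ) := Set.Icc (0:ℝ) (2*π) ×ˢ Set.Icc (0:ℝ) (2*π) with hK
  have hKcompact : IsCompact K := (isCompact_Icc).prod isCompact_Icc
  have hKne : K.Nonempty := by
    refine ⟨(0, 0), ?_⟩
    constructor <;> exact ⟨le_refl 0, by positivity⟩
  -- positivity of the base on K
  have hbase : ∀ s ∈ Set.Ico (0:ℝ) Sstar, ∀ p ∈ K,
      0 < 1 + (lam + 1) * γ0 p * s := by
    rintro s ⟨hs0, hsS⟩ p hp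
    by_cases hcase : lam < -1
    · have hl1 : lam + 1 < 0 := by linarith
      have hle : γ0 p ≤ γp := hγp.2 ⟨p, hp, rfl⟩
      have hprod : (lam + 1) * (s * (γp - γ0 p)) ≤ 0 :=
        mul_nonpos_of_nonpos_of_nonneg hl1.le (mul_nonneg hs0 (sub_nonneg.mpr hle))
      have hkey : (lam + 1) * γp * s ≤ (lam + 1) * γ0 p * s := by nlinarith
      rcases le_or_gt 0 ((lam + 1) * γp) with h | h
      · nlinarith
      · have hSs : Sstar = -1 / ((lam + 1) * γp) := by rw [hSstar, if_pos hcase]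
        have hlt : s < -1 / ((lam + 1) * γp) := hSs ▸ hsS
        have h2 := mul_lt_mul_of_neg_left hlt h
        rw [show ((lam + 1) * γp) * (-1 / ((lam + 1) * γp)) = -1 by
          rw [mul_div_assoc', mul_neg_one, neg_div, div_self h.ne]] at h2
        nlinarith
    · have hl1 : 0 < lam + 1 := by
        rcases lt_or_gt_of_ne hlam with h | h
        · exact absurd h hcase
        · linarith
      have hle : γm ≤ γ0 p := hγm.2 ⟨p, hp, rfl⟩
      have hprod : 0 ≤ (lam + 1) * (s * (γ0 p - γm)) :=
        mul_nonneg hl1.le (mul_nonneg hs0 (sub_nonneg.mpr hle))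
      have hkey : (lam + 1) * γm * s ≤ (lam + 1) * γ0 p * s := by nlinarith
      rcases le_or_gt 0 ((lam + 1) * γm) with h | h
      · nlinarith
      · have hSs : Sstar = -1 / ((lam + 1) * γm) := by rw [hSstar, if_neg hcase]
        have hlt : s < -1 / ((lam + 1) * γm) := hSs ▸ hsS
        have h2 := mul_lt_mul_of_neg_left hlt h
        rw [show ((lam + 1) * γm) * (-1 / ((lam + 1) * γm)) = -1 by
          rw [mul_div_assoc', mul_neg_one, neg_div, div_self h.ne]] at h2
        nlinarith
  -- G positive
  have hGpos : ∀ s ∈ Set.Ico (0:ℝ) Sstar, 0 < G s := by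
    intro s hs
    rw [hG s hs]
    apply Real.rpow_pos_of_pos
    unfold tavg
    set h : ℝ × ℝ → ℝ := fun p => (1 + (lam + 1) * γ0 p * s) ^ (-1 / (lam + 1) : ℝ) with hh
    have hhpos : ∀ p ∈ K, 0 < h p := fun p hp =>
      Real.rpow_pos_of_pos (hbase s hs p hp) _
    have hhcont : ContinuousOn h K := by
      apply ContinuousOn.rpow_const
      · exact (by continuity : Continuous fun p : ℝ × ℝ => 1 + (lam + 1) * γ0 p * s).continuousOn
      · intro p hp
        exact Or.inl (ne_of_gt (hbase s hs p hp))
    obtain ⟨p0, hp0, hmin⟩ := hKcompact.exists_isMinOn hKne hhcont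
    have hKmeas : MeasurableSet K := hKcompact.measurableSet
    have hvol : volume K = ENNReal.ofReal (2*π) * ENNReal.ofReal (2*π) := by
      rw [hK, MeasureTheory.Measure.volume_eq_prod, MeasureTheory.Measure.prod_prod,
        Real.volume_Icc, sub_zero]
    have hvolR : (volume K).toReal = (2*π) * (2*π) := by
      rw [hvol, ENNReal.toReal_mul, ENNReal.toReal_ofReal (by positivity)]
    have hint : IntegrableOn h K := hhcont.integrableOn_compact hKcompact
    have hge := MeasureTheory.setIntegral_ge_of_const_le hKmeas
      (by rw [hvol]; exact ENNReal.mul_ne_top ofReal_ne_top ofReal_ne_top)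
      (fun p hp => hmin hp) hint
    have : 0 < ∫ p in K, h p := by
      have h1 : 0 < h p0 := hhpos p0 hp0
      calc (0:ℝ) < h p0 * ((2*π) * (2*π)) := by positivity
        _ = h p0 * (volume K).toReal := by rw [hvolR]
        _ ≤ ∫ p in K, h p := by rw [mul_comm]; exact hge
    positivity
  refine ⟨hGpos, ?_⟩
  intro T hT S hS0 hS' hS2 htend
  set D : Set ℝ := {t : ℝ | 0 ≤ t ∧ ENNReal.ofReal t < T} with hD
  have hcontS : ContinuousOn S D := fun t ht => (hS' t ht).continuousWithinAt
  -- a helper for both cases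
  have main : ∀ (I : Set ℝ), D = I → Convex ℝ I → StrictMonoOn S I := by
    intro I hDI hconv
    have hcontI : ContinuousOn S I := by rw [← hDI]; exact hcontS
    apply strictMonoOn_of_deriv_pos hconv hcontI
    intro x hx
    have hxD : x ∈ D := by rw [hDI]; exact interior_subset hx
    have h1 := hS' x hxD
    rw [hDI] at h1
    have hda : HasDerivAt S (G (S x)) x :=
      h1.hasDerivAt (mem_interior_iff_mem_nhds.mp hx)
    rw [hda.deriv]
    exact hGpos _ (hS2 x hxD)
  -- case split on T
  by_cases hTtop : T = ⊤
  · have hDI : D = Set.Ici 0 := by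
      ext t; simp [hD, hTtop]
    have hmonoI : StrictMonoOn S (Set.Ici 0) := main _ hDI (convex_Ici 0)
    have hmono : StrictMonoOn S D := by rw [hDI]; exact hmonoI
    refine ⟨hmono, ?_⟩
    have hS'I : ∀ t ∈ Set.Ici (0:ℝ), HasDerivWithinAt S (G (S t)) (Set.Ici 0) t := by
      intro t ht
      have := hS' t (show t ∈ D by rw [hDI]; exact ht)
      rwa [hDI] at this
    have hS2I : ∀ t ∈ Set.Ici (0:ℝ), 0 ≤ S t ∧ S t < Sstar := fun t ht =>
      hS2 t (show t ∈ D by rw [hDI]; exact ht)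
    have hcontSI : ContinuousOn S (Set.Ici 0) := by rw [← hDI]; exact hcontS
    have himg : S '' Set.Ici 0 = Set.Ico 0 Sstar := by
      apply Set.Subset.antisymm
      · rintro _ ⟨t, ht, rfl⟩
        exact ⟨(hS2I t ht).1, (hS2I t ht).2⟩
      · rintro y ⟨hy0, hyS⟩
        rw [if_pos hTtop] at htend
        have hev : ∀ᶠ t in atTop, y < S t := htend.eventually (eventually_gt_nhds hyS)
        obtain ⟨t1, ht1, hyt1⟩ := (hev.and (eventually_ge_atTop 0)).exists
        have hsub : Set.Icc 0 t1 ⊆ Set.Ici 0 := fun t ht => ht.1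
        have hivt := intermediate_value_Icc hyt1 (hcontSI.mono hsub)
        have hy' : y ∈ Set.Icc (S 0) (S t1) := ⟨by rw [hS0]; exact hy0, le_of_lt ht1⟩
        obtain ⟨t, htmem, hts⟩ := hivt hy'
        exact ⟨t, hsub htmem, hts⟩
    have hinj : Set.InjOn S (Set.Ici 0) := hmonoI.injOn
    have key := MeasureTheory.lintegral_image_eq_lintegral_abs_det_fderiv_mul volume
      measurableSet_Ici (fun x hx => (hS'I x hx).hasFDerivWithinAt) hinj
      (fun s => ENNReal.ofReal (G s)⁻¹)
    rw [himg] at key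
    rw [key]
    have heq : ∫⁻ x in Set.Ici (0:ℝ),
        ENNReal.ofReal |(ContinuousLinearMap.toSpanSingleton ℝ (G (S x))).det|
          * ENNReal.ofReal (G (S x))⁻¹ = ∫⁻ _ in Set.Ici (0:ℝ), 1 := by
      apply MeasureTheory.setLIntegral_congr_fun measurableSet_Ici
      intro x hx
      have hgp : 0 < G (S x) := hGpos _ (hS2I x hx)
      beta_reduce
      rw [ContinuousLinearMap.det_toSpanSingleton, abs_of_pos hgp,
        ← ENNReal.ofReal_mul hgp.le, mul_inv_cancel₀ hgp.ne', ENNReal.ofReal_one]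
    rw [heq, MeasureTheory.setLIntegral_one, Real.volume_Ici, hTtop]
  · have hTpos : 0 < T.toReal := ENNReal.toReal_pos hT.ne' hTtop
    have hDI : D = Set.Ico 0 T.toReal := by
      ext t
      simp only [hD, Set.mem_setOf_eq, Set.mem_Ico]
      constructor
      · rintro ⟨h1, h2⟩
        exact ⟨h1, (ENNReal.ofReal_lt_iff_lt_toReal h1 hTtop).mp h2⟩
      · rintro ⟨h1, h2⟩
        exact ⟨h1, (ENNReal.ofReal_lt_iff_lt_toReal h1 hTtop).mpr h2⟩
    have hmonoI : StrictMonoOn S (Set.Ico 0 T.toReal) := main _ hDI (convex_Ico _ _)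
    have hmono : StrictMonoOn S D := by rw [hDI]; exact hmonoI
    refine ⟨hmono, ?_⟩
    have hS'I : ∀ t ∈ Set.Ico (0:ℝ) T.toReal,
        HasDerivWithinAt S (G (S t)) (Set.Ico 0 T.toReal) t := by
      intro t ht
      have := hS' t (show t ∈ D by rw [hDI]; exact ht)
      rwa [hDI] at this
    have hS2I : ∀ t ∈ Set.Ico (0:ℝ) T.toReal, 0 ≤ S t ∧ S t < Sstar := fun t ht =>
      hS2 t (show t ∈ D by rw [hDI]; exact ht)
    have hcontSI : ContinuousOn S (Set.Ico 0 T.toReal) := by rw [← hDI]; exact hcontS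
    have himg : S '' Set.Ico 0 T.toReal = Set.Ico 0 Sstar := by
      apply Set.Subset.antisymm
      · rintro _ ⟨t, ht, rfl⟩
        exact ⟨(hS2I t ht).1, (hS2I t ht).2⟩
      · rintro y ⟨hy0, hyS⟩
        rw [if_neg hTtop] at htend
        haveI : (𝓝[<] T.toReal).NeBot := nhdsWithin_Iio_self_neBot' ⟨0, hTpos⟩
        have hev : ∀ᶠ t in 𝓝[<] T.toReal, y < S t := htend.eventually (eventually_gt_nhds hyS)
        have hev2 : Set.Ioo (0:ℝ) T.toReal ∈ 𝓝[<] T.toReal :=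
          Ioo_mem_nhdsLT_of_mem ⟨hTpos, le_refl _⟩
        obtain ⟨t1, ht1, hmem⟩ := (hev.and hev2).exists
        have hsub : Set.Icc 0 t1 ⊆ Set.Ico 0 T.toReal := fun t ht =>
          ⟨ht.1, lt_of_le_of_lt ht.2 hmem.2⟩
        have hivt := intermediate_value_Icc hmem.1.le (hcontSI.mono hsub)
        have hy' : y ∈ Set.Icc (S 0) (S t1) := ⟨by rw [hS0]; exact hy0, le_of_lt ht1⟩
        obtain ⟨t, htmem, hts⟩ := hivt hy'
        exact ⟨t, hsub htmem, hts⟩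
    have hinj : Set.InjOn S (Set.Ico 0 T.toReal) := hmonoI.injOn
    have key := MeasureTheory.lintegral_image_eq_lintegral_abs_det_fderiv_mul volume
      measurableSet_Ico (fun x hx => (hS'I x hx).hasFDerivWithinAt) hinj
      (fun s => ENNReal.ofReal (G s)⁻¹)
    rw [himg] at key
    rw [key]
    have heq : ∫⁻ x in Set.Ico (0:ℝ) T.toReal,
        ENNReal.ofReal |(ContinuousLinearMap.toSpanSingleton ℝ (G (S x))).det|
          * ENNReal.ofReal (G (S x))⁻¹ = ∫⁻ _ in Set.Ico (0:ℝ) T.toReal, 1 := by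
      apply MeasureTheory.setLIntegral_congr_fun measurableSet_Ico
      intro x hx
      have hgp : 0 < G (S x) := hGpos _ (hS2I x hx)
      beta_reduce
      rw [ContinuousLinearMap.det_toSpanSingleton, abs_of_pos hgp,
        ← ENNReal.ofReal_mul hgp.le, mul_inv_cancel₀ hgp.ne', ENNReal.ofReal_one]
    rw [heq, MeasureTheory.setLIntegral_one, Real.volume_Ico, sub_zero,
      ENNReal.ofReal_toReal hTtop]
end

section
/- Let λ < −1 and let γ₀ : ℝ² → ℝ be continuous, 2π-periodic in each variable, with torus mean ⟨γ₀⟩ = 0 and γ₀ not identically zero. Set γ₊ := max γ₀ over [0,2π]² (so γ₊ > 0) and S* := −1/((λ+1)γ₊) > 0. Then lim_{S→S*⁻} ⟨(1 + (λ+1)γ₀S)^{−1/(λ+1)}⟩^{−2(λ+1)} > 0, and the singularity time T* := ∫₀^{S*} ⟨(1 + (λ+1)γ₀S)^{−1/(λ+1)}⟩^{2(λ+1)} dS is finite: T* < ∞. -/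
open Real MeasureTheory Topology Filter ENNReal

/-- unconditional finite-time blowup for `λ < −1`: the limit of
`G(S) = ⟨(1+(λ+1)γ₀S)^(−1/(λ+1))⟩^(−2(λ+1))` as `S → S*⁻` exists and is positive, and
the singularity time `T* = ∫₀^{S*} ⟨(1+(λ+1)γ₀S)^(−1/(λ+1))⟩^(2(λ+1)) dS` is finite. -/
theorem stmt17 (lam : ℝ) (hlam : lam < -1)
    (γ0 : ℝ × ℝ → ℝ) (hcont : Continuous γ0)
    (hper1 : ∀ y : ℝ, Function.Periodic (fun x => γ0 (x, y)) (2*π))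
    (hper2 : ∀ x : ℝ, Function.Periodic (fun y => γ0 (x, y)) (2*π))
    (hmean : tavg γ0 = 0) (hne : γ0 ≠ 0)
    (γp : ℝ)
    (hγp : IsGreatest (γ0 '' (Set.Icc (0:ℝ) (2*π) ×ˢ Set.Icc (0:ℝ) (2*π))) γp)
    (Sstar : ℝ) (hSstar : Sstar = -1 / ((lam + 1) * γp))
    (G : ℝ → ℝ)
    (hG : ∀ s ∈ Set.Ico 0 Sstar,
      G s = (tavg fun p => (1 + (lam + 1) * γ0 p * s) ^ (-1 / (lam + 1) : ℝ))
              ^ (-(2 * (lam + 1)) : ℝ)) :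
    (∃ L : ℝ, Filter.Tendsto G (𝓝[<] Sstar) (𝓝 L) ∧ 0 < L) ∧
    (∫⁻ s in Set.Ico (0:ℝ) Sstar,
      ENNReal.ofReal ((tavg fun p => (1 + (lam + 1) * γ0 p * s) ^ (-1 / (lam + 1) : ℝ))
        ^ (2 * (lam + 1) : ℝ))) < ⊤ := by
  have hπ := Real.pi_pos
  have h2π : (0:ℝ) < 2 * π := by linarith
  have hl1 : lam + 1 < 0 := by linarith
  set Q : Set (ℝ × ℝ) := Set.Icc (0:ℝ) (2*π) ×ˢ Set.Icc (0:ℝ) (2*π) with hQdef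
  have hQmeas : MeasurableSet Q := (measurableSet_Icc.prod measurableSet_Icc)
  have hQcomp : IsCompact Q := isCompact_Icc.prod isCompact_Icc
  have hQfin : volume Q < ⊤ := hQcomp.measure_lt_top
  have hd : (0:ℝ) < 4 * π ^ 2 := by positivity
  set e : ℝ := -1 / (lam + 1) with hedef
  have he : 0 < e := by
    rw [hedef]
    apply div_pos_of_neg_of_neg <;> linarith
  -- the integral of γ0 over Q is 0
  have hint0 : (∫ p in Q, γ0 p) = 0 := by
    have := hmean
    rw [tavg, _root_.div_eq_zero_iff] at this
    rcases this with h | h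
    · exact h
    · exact absurd h (by positivity)
  -- Q is the closure of its interior
  have hQclos : Q ⊆ closure (interior Q) := by
    have h1 : interior Q = Set.Ioo (0:ℝ) (2*π) ×ˢ Set.Ioo (0:ℝ) (2*π) := by
      rw [hQdef, interior_prod_eq, interior_Icc]
    rw [h1, closure_prod_eq, closure_Ioo h2π.ne, hQdef]
  -- open sets touching Q have positive-measure intersection with Q
  have hposmeas : ∀ U : Set (ℝ × ℝ), IsOpen U → (∃ p ∈ Q, p ∈ U) →
      0 < volume (U ∩ Q) := by
    intro U hU ⟨p, hpQ, hpU⟩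
    have hmono : volume (U ∩ interior Q) ≤ volume (U ∩ Q) :=
      measure_mono (Set.inter_subset_inter_right _ interior_subset)
    refine lt_of_lt_of_le ?_ hmono
    have hopen : IsOpen (U ∩ interior Q) := hU.inter isOpen_interior
    refine hopen.measure_pos volume ?_
    have := hQclos hpQ
    rcases mem_closure_iff.1 this U hU hpU with ⟨q, hqU, hqint⟩
    exact ⟨q, hqU, hqint⟩
  -- there is a point of Q where γ0 ≠ 0
  have hnz : ∃ p ∈ Q, γ0 p ≠ 0 := by
    rcases Function.ne_iff.1 hne with ⟨⟨x, y⟩, hxy⟩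
    rcases (hper2 x).exists_mem_Ico₀ h2π y with ⟨y', hy', hy'eq⟩
    rcases (hper1 y').exists_mem_Ico₀ h2π x with ⟨x', hx', hx'eq⟩
    refine ⟨(x', y'), ⟨Set.Ico_subset_Icc_self hx', Set.Ico_subset_Icc_self hy'⟩, ?_⟩
    simp only [Pi.zero_apply] at hxy
    rw [← hx'eq, ← hy'eq]
    exact hxy
  -- sign change: both positive and negative values on Q
  have hsign : ∀ (σ : ℝ), σ = 1 ∨ σ = -1 → ¬(∀ p ∈ Q, σ * γ0 p ≤ 0) := by
    intro σ hσ hall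
    obtain ⟨p0, hp0Q, hp0⟩ := hnz
    have hσne : σ ≠ 0 := by rcases hσ with h | h <;> simp [h]
    have hneg0 : σ * γ0 p0 < 0 :=
      lt_of_le_of_ne (hall p0 hp0Q) (by
        intro h
        exact hp0 (by
          rcases mul_eq_zero.1 h with h' | h'
          · exact absurd h' hσne
          · exact h'))
    -- the integral of -(σ • γ0) over Q is positive, but equals 0
    have hposint : 0 < ∫ p in Q, (-(σ * γ0 p)) := by
      rw [setIntegral_pos_iff_support_of_nonneg_ae]
      · have hop : IsOpen (Function.support fun p => -(σ * γ0 p)) := by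
          have : Function.support (fun p => -(σ * γ0 p)) =
              (fun p => -(σ * γ0 p)) ⁻¹' {(0:ℝ)}ᶜ := by
            ext p; simp [Function.mem_support]
          rw [this]
          exact ((continuous_const.mul hcont).neg).isOpen_preimage _ isOpen_compl_singleton
        refine hposmeas _ hop ⟨p0, hp0Q, ?_⟩
        show ¬(-(σ * γ0 p0) = 0)
        rw [neg_eq_zero]
        exact hneg0.ne
      · refine ae_restrict_of_forall_mem hQmeas fun p hp => ?_
        simpa using hall p hp
      · exact ((continuous_const.mul hcont).neg).continuousOn.integrableOn_compact hQcomp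
    have : (∫ p in Q, (-(σ * γ0 p))) = 0 := by
      rw [integral_neg, integral_const_mul, hint0, mul_zero, neg_zero]
    linarith
  -- positive and negative values on Q
  have hposQ : ∃ p ∈ Q, 0 < γ0 p := by
    by_contra h
    push_neg at h
    exact hsign 1 (Or.inl rfl) fun p hp => by simpa using h p hp
  have hnegQ : ∃ p ∈ Q, γ0 p < 0 := by
    by_contra h
    push_neg at h
    exact hsign (-1) (Or.inr rfl) fun p hp => by
      have := h p hp; simp only [neg_mul, one_mul, neg_nonpos]; linarith
  obtain ⟨pp, hppQ, hpp⟩ := hposQ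
  have hγppos : 0 < γp := lt_of_lt_of_le hpp (hγp.2 ⟨pp, hppQ, rfl⟩)
  have hS0 : 0 < Sstar := by
    rw [hSstar]
    apply div_pos_of_neg_of_neg (by norm_num)
    exact mul_neg_of_neg_of_pos hl1 hγppos
  have hcS : (lam + 1) * γp * Sstar = -1 := by
    rw [hSstar]
    have : (lam + 1) * γp ≠ 0 := (mul_neg_of_neg_of_pos hl1 hγppos).ne
    field_simp
    rw [div_self hl1.ne]
  have hγle : ∀ p ∈ Q, γ0 p ≤ γp := fun p hp => hγp.2 ⟨p, hp, rfl⟩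
  -- W: negativity set inside Q
  set W : Set (ℝ × ℝ) := (γ0 ⁻¹' Set.Iio 0) ∩ Q with hWdef
  have hWmeas : MeasurableSet W :=
    ((hcont.isOpen_preimage _ isOpen_Iio).measurableSet).inter hQmeas
  have hWpos : 0 < volume W := by
    obtain ⟨pn, hpnQ, hpn⟩ := hnegQ
    exact hposmeas _ (hcont.isOpen_preimage _ isOpen_Iio) ⟨pn, hpnQ, hpn⟩
  have hWfin : volume W < ⊤ :=
    lt_of_le_of_lt (measure_mono Set.inter_subset_right) hQfin
  have hw : 0 < (volume W).toReal := ENNReal.toReal_pos hWpos.ne' hWfin.ne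
  -- nonnegativity of the base
  have hbase : ∀ s ∈ Set.Icc (0:ℝ) Sstar, ∀ p ∈ Q, 0 ≤ 1 + (lam + 1) * γ0 p * s := by
    intro s hs p hp
    have h1 : 0 ≤ (γp - γ0 p) * (-(lam + 1) * s) :=
      mul_nonneg (sub_nonneg.2 (hγle p hp)) (mul_nonneg (by linarith) hs.1)
    have h2 : 0 ≤ (Sstar - s) * (-((lam + 1) * γp)) :=
      mul_nonneg (sub_nonneg.2 hs.2) (by nlinarith)
    nlinarith [hcS]
  -- uniform bound of γ0 on Q
  obtain ⟨C, hC⟩ := hQcomp.exists_bound_of_continuousOn hcont.continuousOn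
  have hC0 : 0 ≤ C := le_trans (norm_nonneg _) (hC pp hppQ)
  set M : ℝ := (1 + -(lam + 1) * C * Sstar) ^ e with hMdef
  have hM : ∀ s ∈ Set.Icc (0:ℝ) Sstar, ∀ p ∈ Q,
      (1 + (lam + 1) * γ0 p * s) ^ e ≤ M := by
    intro s hs p hp
    have habs : |γ0 p| ≤ C := by simpa [Real.norm_eq_abs] using hC p hp
    have h1 : 0 ≤ (-(lam + 1) * s) * (C + γ0 p) :=
      mul_nonneg (mul_nonneg (by linarith) hs.1) (by cases abs_le.1 habs; linarith)
    have h2 : 0 ≤ (Sstar - s) * (-(lam + 1)) * C :=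
      mul_nonneg (mul_nonneg (sub_nonneg.2 hs.2) (by linarith)) hC0
    exact Real.rpow_le_rpow (hbase s hs p hp) (by nlinarith) he.le
  -- continuity and integrability of the integrand
  have hfc : ∀ s : ℝ, Continuous fun p => (1 + (lam + 1) * γ0 p * s) ^ e := by
    intro s
    exact (continuous_const.add ((continuous_const.mul hcont).mul continuous_const)).rpow_const
      fun p => Or.inr he.le
  have hfint : ∀ s : ℝ, IntegrableOn (fun p => (1 + (lam + 1) * γ0 p * s) ^ e) Q :=
    fun s => ((hfc s).continuousOn).integrableOn_compact hQcomp
  -- lower bound for the integral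
  have hIlb : ∀ s ∈ Set.Icc (0:ℝ) Sstar,
      (volume W).toReal ≤ ∫ p in Q, (1 + (lam + 1) * γ0 p * s) ^ e := by
    intro s hs
    have h1 : (volume W).toReal = ∫ _ in W, (1:ℝ) := by
      simp [setIntegral_const]
      rfl
    rw [h1]
    have hle1 : ∫ _ in W, (1:ℝ) ≤ ∫ p in W, (1 + (lam + 1) * γ0 p * s) ^ e := by
      refine setIntegral_mono_on (integrableOn_const hWfin.ne)
        ((hfint s).mono_set Set.inter_subset_right) hWmeas fun p hp => ?_
      have hγn : γ0 p < 0 := hp.1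
      have hb1 : 1 ≤ 1 + (lam + 1) * γ0 p * s :=
        le_add_of_nonneg_right (mul_nonneg (mul_nonneg_iff.2 (Or.inr ⟨hl1.le, hγn.le⟩)) hs.1)
      calc (1:ℝ) = (1:ℝ) ^ e := (Real.one_rpow e).symm
        _ ≤ (1 + (lam + 1) * γ0 p * s) ^ e := Real.rpow_le_rpow zero_le_one hb1 he.le
    refine hle1.trans (setIntegral_mono_set (hfint s) ?_ (HasSubset.Subset.eventuallyLE Set.inter_subset_right))
    exact ae_restrict_of_forall_mem hQmeas fun p hp => Real.rpow_nonneg (hbase s hs p hp) e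
  -- continuity of the integral from the left at Sstar
  have hItend : Tendsto (fun s => ∫ p in Q, (1 + (lam + 1) * γ0 p * s) ^ e)
      (𝓝[<] Sstar) (𝓝 (∫ p in Q, (1 + (lam + 1) * γ0 p * Sstar) ^ e)) := by
    refine MeasureTheory.tendsto_integral_filter_of_dominated_convergence (fun _ => M)
      (Eventually.of_forall fun s => (hfc s).aestronglyMeasurable) ?_
      (integrableOn_const hQfin.ne) ?_
    · filter_upwards [Ioo_mem_nhdsLT_of_mem (Set.mem_Ioc.2 ⟨hS0, le_refl _⟩)] with s hs
      refine ae_restrict_of_forall_mem hQmeas fun p hp => ?_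
      have hsIcc : s ∈ Set.Icc (0:ℝ) Sstar := ⟨hs.1.le, hs.2.le⟩
      rw [Real.norm_eq_abs, abs_of_nonneg (Real.rpow_nonneg (hbase s hsIcc p hp) e)]
      exact hM s hsIcc p hp
    · refine Eventually.of_forall fun p => ?_
      have hca : ContinuousAt (fun s => (1 + (lam + 1) * γ0 p * s) ^ e) Sstar :=
        ContinuousAt.rpow_const (by fun_prop) (Or.inr he.le)
      exact hca.tendsto.mono_left nhdsWithin_le_nhds
  -- positivity at Sstar
  have hFSpos : 0 < (tavg fun p => (1 + (lam + 1) * γ0 p * Sstar) ^ e) := by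
    simp only [tavg]
    apply div_pos _ hd
    exact lt_of_lt_of_le hw (hIlb Sstar ⟨hS0.le, le_refl _⟩)
  -- tendsto of tavg
  have hFt : Tendsto (fun s => tavg fun p => (1 + (lam + 1) * γ0 p * s) ^ e)
      (𝓝[<] Sstar) (𝓝 (tavg fun p => (1 + (lam + 1) * γ0 p * Sstar) ^ e)) := by
    simp only [tavg]
    exact hItend.div_const _
  constructor
  · refine ⟨(tavg fun p => (1 + (lam + 1) * γ0 p * Sstar) ^ e) ^ (-(2 * (lam + 1))), ?_, ?_⟩
    · have hGt : Tendsto (fun s => (tavg fun p => (1 + (lam + 1) * γ0 p * s) ^ e)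
          ^ (-(2 * (lam + 1)) : ℝ)) (𝓝[<] Sstar)
          (𝓝 ((tavg fun p => (1 + (lam + 1) * γ0 p * Sstar) ^ e) ^ (-(2 * (lam + 1))))) :=
        hFt.rpow_const (Or.inl hFSpos.ne')
      refine hGt.congr' ?_
      filter_upwards [Ioo_mem_nhdsLT_of_mem (Set.mem_Ioc.2 ⟨hS0, le_refl _⟩)] with s hs
      exact (hG s ⟨hs.1.le, hs.2⟩).symm
    · exact Real.rpow_pos_of_pos hFSpos _
  · -- finiteness of the singularity time
    set c : ℝ := (volume W).toReal / (4 * π ^ 2) with hcdef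
    have hc : 0 < c := div_pos hw hd
    have hFlb : ∀ s ∈ Set.Ico (0:ℝ) Sstar,
        c ≤ tavg fun p => (1 + (lam + 1) * γ0 p * s) ^ e := by
      intro s hs
      simp only [tavg, hcdef]
      gcongr
      exact hIlb s ⟨hs.1, hs.2.le⟩
    calc (∫⁻ s in Set.Ico (0:ℝ) Sstar,
        ENNReal.ofReal ((tavg fun p => (1 + (lam + 1) * γ0 p * s) ^ e)
          ^ (2 * (lam + 1) : ℝ)))
        ≤ ∫⁻ _ in Set.Ico (0:ℝ) Sstar, ENNReal.ofReal (c ^ (2 * (lam + 1) : ℝ)) := by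
          refine setLIntegral_mono measurable_const fun s hs => ?_
          exact ENNReal.ofReal_le_ofReal
            (Real.rpow_le_rpow_of_nonpos hc (hFlb s hs) (by linarith))
      _ = ENNReal.ofReal (c ^ (2 * (lam + 1) : ℝ)) * volume (Set.Ico (0:ℝ) Sstar) :=
          setLIntegral_const _ _
      _ < ⊤ := by
          apply ENNReal.mul_lt_top ENNReal.ofReal_lt_top
          rw [Real.volume_Ico]
          exact ENNReal.ofReal_lt_top
end

section
/- Let λ < −1 and let γ₀ : ℝ² → ℝ be continuous, 2π-periodic in each variable, with torus mean ⟨γ₀⟩ = 0 and γ₀ not identically zero. Set γ₊ := max γ₀ over [0,2π]² and S* := −1/((λ+1)γ₊), and for S ∈ [0,S*) define G(S) := ⟨(1 + (λ+1)γ₀S)^{−1/(λ+1)}⟩^{−2(λ+1)}. Let T* < ∞ and let S : [0,T*) → ℝ be differentiable with S(0) = 0, S'(t) = G(S(t)), 0 ≤ S(t) < S* for all t, and S(t) → S* as t → T*⁻. Define the stretching rate along the pathline starting at a maximum point of γ₀ by g₊(t) := S'(t)γ₊/(1 + (λ+1)γ₊S(t)) − S''(t)/(2(λ+1)S'(t)),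 and for ω₀ ≠ 0 define w(t) := ω₀·[(1 + (λ+1)γ₊S(t))/S'(t)^{1/2}]^{1/(λ+1)}. Then: (a) lim_{t→T*⁻} (T* − t)·g₊(t) = 1/|λ+1|; and (b) lim_{t→T*⁻} (T* − t)^{1/|λ+1|}·|w(t)| = |ω₀|·|λ+1|^{−1/|λ+1|}·⟨(γ₊ − γ₀)^{1/|λ+1|}⟩^{−1}. -/
open Real MeasureTheory Topology Filter

section helpers

lemma ball_Icc_pos' {x L r : ℝ} (hx : x ∈ Set.Icc 0 L) (hL : 0 < L) (hr : 0 < r) :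
    0 < MeasureTheory.volume (Metric.ball x r ∩ Set.Icc 0 L) := by
  have hsub : Set.Ioo (max (x - r) 0) (min (x + r) L) ⊆ Metric.ball x r ∩ Set.Icc 0 L := by
    intro y hy
    rw [Real.ball_eq_Ioo]
    obtain ⟨h1, h2⟩ := hy
    constructor
    · exact ⟨lt_of_le_of_lt (le_max_left _ _) h1, lt_of_lt_of_le h2 (min_le_left _ _)⟩
    · exact ⟨le_of_lt (lt_of_le_of_lt (le_max_right _ _) h1),
        le_of_lt (lt_of_lt_of_le h2 (min_le_right _ _))⟩
  refine lt_of_lt_of_le ?_ (measure_mono hsub)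
  rw [Real.volume_Ioo]
  apply ENNReal.ofReal_pos.2
  have h1 : max (x - r) 0 < min (x + r) L := by
    obtain ⟨hx0, hxL⟩ := hx
    rcases max_cases (x - r) 0 with ⟨he, _⟩ | ⟨he, _⟩ <;>
      rcases min_cases (x + r) L with ⟨hf, _⟩ | ⟨hf, _⟩ <;> rw [he, hf] <;> linarith
  linarith

lemma prod_ball_Icc_pos' {q : ℝ × ℝ} {L r : ℝ}
    (hq : q ∈ Set.Icc (0:ℝ) L ×ˢ Set.Icc (0:ℝ) L) (hL : 0 < L) (hr : 0 < r) :
    0 < MeasureTheory.volume (Metric.ball q r ∩ Set.Icc (0:ℝ) L ×ˢ Set.Icc (0:ℝ) L) := by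
  rw [← ball_prod_same, Set.prod_inter_prod, MeasureTheory.Measure.volume_eq_prod,
    MeasureTheory.Measure.prod_prod]
  exact ENNReal.mul_pos (ball_Icc_pos' hq.1 hL hr).ne' (ball_Icc_pos' hq.2 hL hr).ne'

lemma integral_Q_pos' {L : ℝ} (hL : 0 < L) (f : ℝ × ℝ → ℝ)
    (hfcont : Continuous f)
    (h0 : ∀ p ∈ Set.Icc (0:ℝ) L ×ˢ Set.Icc (0:ℝ) L, 0 ≤ f p)
    (p₀ : ℝ × ℝ) (hp₀Q : p₀ ∈ Set.Icc (0:ℝ) L ×ˢ Set.Icc (0:ℝ) L) (hp₀ : 0 < f p₀) :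
    0 < ∫ p in Set.Icc (0:ℝ) L ×ˢ Set.Icc (0:ℝ) L, f p := by
  set Q := Set.Icc (0:ℝ) L ×ˢ Set.Icc (0:ℝ) L with hQdef
  have hQm : MeasurableSet Q := measurableSet_Icc.prod measurableSet_Icc
  have hQc : IsCompact Q := isCompact_Icc.prod isCompact_Icc
  rw [MeasureTheory.setIntegral_pos_iff_support_of_nonneg_ae]
  · have hev : ∀ᶠ y in 𝓝 p₀, 0 < f y :=
      (hfcont.continuousAt).eventually (eventually_gt_nhds hp₀)
    rw [Metric.eventually_nhds_iff] at hev
    obtain ⟨r, hr, hball⟩ := hev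
    refine lt_of_lt_of_le (prod_ball_Icc_pos' hp₀Q hL hr) (measure_mono ?_)
    rintro y ⟨hy1, hy2⟩
    exact ⟨ne_of_gt (hball (by simpa [Metric.mem_ball] using hy1)), hy2⟩
  · exact (ae_restrict_iff' hQm).2 (Filter.Eventually.of_forall h0)
  · exact hfcont.continuousOn.integrableOn_compact hQc

end helpers

set_option maxHeartbeats 2000000 in
/-- unconditional blowup asymptotics for `λ < −1`. Along the pathline starting
at a maximum point of `γ₀`, the stretching rate
`g₊(t) = S'(t)γ₊/(1+(λ+1)γ₊S(t)) − S''(t)/(2(λ+1)S'(t))` (with `S' = G∘S`) satisfies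
`(T*−t)·g₊(t) → 1/|λ+1|`, and the vorticity
`w(t) = ω₀[(1+(λ+1)γ₊S(t))/S'(t)^{1/2}]^{1/(λ+1)}` satisfies
`(T*−t)^{1/|λ+1|}·|w(t)| → |ω₀|·|λ+1|^{−1/|λ+1|}·⟨(γ₊−γ₀)^{1/|λ+1|}⟩⁻¹` as `t → T*⁻`. -/
theorem stmt18 (lam : ℝ) (hlam : lam < -1)
    (γ0 : ℝ × ℝ → ℝ) (hcont : Continuous γ0)
    (hper1 : ∀ y : ℝ, Function.Periodic (fun x => γ0 (x, y)) (2*π))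
    (hper2 : ∀ x : ℝ, Function.Periodic (fun y => γ0 (x, y)) (2*π))
    (hmean : tavg γ0 = 0) (hne : γ0 ≠ 0)
    (γp : ℝ)
    (hγp : IsGreatest (γ0 '' (Set.Icc (0:ℝ) (2*π) ×ˢ Set.Icc (0:ℝ) (2*π))) γp)
    (Sstar : ℝ) (hSstar : Sstar = -1 / ((lam + 1) * γp))
    (G : ℝ → ℝ)
    (hG : ∀ s ∈ Set.Ico 0 Sstar,
      G s = (tavg fun p => (1 + (lam + 1) * γ0 p * s) ^ (-1 / (lam + 1) : ℝ))
              ^ (-(2 * (lam + 1)) : ℝ))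
    (Tstar : ℝ) (hTstar : 0 < Tstar) (S : ℝ → ℝ) (hS0 : S 0 = 0)
    (hS : ∀ t ∈ Set.Ico (0:ℝ) Tstar,
      HasDerivWithinAt S (G (S t)) (Set.Ico 0 Tstar) t)
    (hrange : ∀ t ∈ Set.Ico (0:ℝ) Tstar, 0 ≤ S t ∧ S t < Sstar)
    (hlim : Filter.Tendsto S (𝓝[<] Tstar) (𝓝 Sstar))
    (ω0 : ℝ) (hω0 : ω0 ≠ 0) :
    Filter.Tendsto
      (fun t => (Tstar - t) *
        (G (S t) * γp / (1 + (lam + 1) * γp * S t)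
          - derivWithin (fun s => G (S s)) (Set.Ico 0 Tstar) t
              / (2 * (lam + 1) * G (S t))))
      (𝓝[<] Tstar) (𝓝 (1 / |lam + 1|)) ∧
    Filter.Tendsto
      (fun t => (Tstar - t) ^ (1 / |lam + 1| : ℝ) *
        |ω0 * ((1 + (lam + 1) * γp * S t) / G (S t) ^ (1/2 : ℝ)) ^ (1 / (lam + 1) : ℝ)|)
      (𝓝[<] Tstar)
      (𝓝 (|ω0| * |lam + 1| ^ (-1 / |lam + 1| : ℝ)
        * (tavg fun p => (γp - γ0 p) ^ (1 / |lam + 1| : ℝ))⁻¹)) := by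
  obtain ⟨hγmem, hγub⟩ := hγp
  set Q : Set (ℝ×ℝ) := Set.Icc (0:ℝ) (2*π) ×ˢ Set.Icc (0:ℝ) (2*π) with hQdef
  have h2π : 0 < 2*π := by positivity
  have hQm : MeasurableSet Q := measurableSet_Icc.prod measurableSet_Icc
  have hQc : IsCompact Q := isCompact_Icc.prod isCompact_Icc
  have hQfin : MeasureTheory.volume Q < ⊤ := hQc.measure_lt_top
  have harea : (0:ℝ) < 4*π^2 := by positivity
  have hvol : (MeasureTheory.volume Q).toReal = 4*π^2 := by
    rw [hQdef, MeasureTheory.Measure.volume_eq_prod, MeasureTheory.Measure.prod_prod,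
      Real.volume_Icc, sub_zero, ENNReal.toReal_mul, ENNReal.toReal_ofReal h2π.le]
    ring
  have hub : ∀ p ∈ Q, γ0 p ≤ γp := fun p hp => hγub ⟨p, hp, rfl⟩
  obtain ⟨pp, hppQ, hppv⟩ := hγmem
  have hint : ∀ f : ℝ×ℝ→ℝ, Continuous f → MeasureTheory.IntegrableOn f Q :=
    fun f hf => hf.continuousOn.integrableOn_compact hQc
  have hI0 : ∫ p in Q, γ0 p = 0 := by
    have h := hmean
    unfold tavg at h
    rw [div_eq_zero_iff] at h
    rcases h with h | h
    · exact h
    · exact absurd h (by positivity)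
  have hγp0 : 0 ≤ γp := by
    have hle : ∫ p in Q, γ0 p ≤ ∫ _p in Q, γp :=
      MeasureTheory.setIntegral_mono_on (hint _ hcont) (hint _ continuous_const) hQm hub
    rw [hI0, MeasureTheory.setIntegral_const, smul_eq_mul, MeasureTheory.measureReal_def, hvol] at hle
    nlinarith
  have hγppos : 0 < γp := by
    rcases hγp0.lt_or_eq with h | h
    · exact h
    exfalso
    have hzQ : ∀ p ∈ Q, γ0 p = 0 := by
      by_contra hcon
      push_neg at hcon
      obtain ⟨p₀, hp₀Q, hp₀⟩ := hcon
      have hneg : 0 < -γ0 p₀ := by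
        have h2 := hub p₀ hp₀Q; rw [← h] at h2
        cases lt_or_eq_of_le h2 with
        | inl hh => linarith
        | inr hh => exact absurd hh hp₀
      have hpos := integral_Q_pos' h2π (fun p => -γ0 p) hcont.neg
        (fun p hp => by have h2 := hub p hp; rw [← h] at h2; show (0:ℝ) ≤ -γ0 p; linarith)
        p₀ hp₀Q hneg
      rw [MeasureTheory.integral_neg, hI0] at hpos
      simp at hpos
    apply hne
    funext p
    obtain ⟨x, y⟩ := p
    have hx' : γ0 (x, y) = γ0 (x - ⌊x/(2*π)⌋ * (2*π), y) := ((hper1 y).sub_int_mul_eq _).symm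
    have hy' : γ0 (x - ⌊x/(2*π)⌋ * (2*π), y)
        = γ0 (x - ⌊x/(2*π)⌋ * (2*π), y - ⌊y/(2*π)⌋ * (2*π)) :=
      ((hper2 _).sub_int_mul_eq _).symm
    have hmem : (x - ⌊x/(2*π)⌋ * (2*π), y - ⌊y/(2*π)⌋ * (2*π)) ∈ Q :=
      ⟨⟨Int.sub_floor_div_mul_nonneg x h2π, (Int.sub_floor_div_mul_lt x h2π).le⟩,
       ⟨Int.sub_floor_div_mul_nonneg y h2π, (Int.sub_floor_div_mul_lt y h2π).le⟩⟩
    show γ0 (x, y) = 0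
    rw [hx', hy']
    exact hzQ _ hmem
  have hlγ : (lam + 1) * γp < 0 := mul_neg_of_neg_of_pos (by linarith) hγppos
  have hSpos : 0 < Sstar := by
    rw [hSstar]; exact div_pos_iff.2 (Or.inr ⟨by norm_num, hlγ⟩)
  have e1 : (lam + 1) * γp = -1 / Sstar := by
    rw [hSstar]; field_simp
  have e1' : Sstar * γp * (-(lam+1)) = 1 := by
    have hS0' : Sstar ≠ 0 := hSpos.ne'
    field_simp at e1
    nlinarith [e1]
  -- abbreviations
  set m : ℝ := -(lam+1) with hmdef
  have hm : 0 < m := by rw [hmdef]; linarith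
  have hlm : lam + 1 = -m := by rw [hmdef]; ring
  have habs : |lam+1| = m := by rw [abs_of_neg (by linarith : lam + 1 < 0), hmdef]
  rw [habs, show (-1/m : ℝ) = -(1/m) by ring]
  set pe : ℝ := 1/m with hpedef
  have hpe : 0 < pe := by rw [hpedef]; positivity
  have hpem : pe * m = 1 := by rw [hpedef]; field_simp
  have hSγ : Sstar * γp = 1/m := by
    rw [eq_div_iff hm.ne']; rw [hmdef]; nlinarith [e1']
  -- bound on γ0
  obtain ⟨B, hB⟩ := hQc.exists_bound_of_continuousOn hcont.continuousOn
  have hB0 : 0 ≤ B := le_trans (norm_nonneg _) (hB pp hppQ)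
  set Bb : ℝ := 1 + m*B*Sstar with hBbdef
  have hBb1 : (1:ℝ) ≤ Bb := by
    have : 0 ≤ m*B*Sstar := by positivity
    rw [hBbdef]; linarith
  have hBb0 : 0 < Bb := by linarith
  -- base bounds
  have hbase_ge : ∀ a ∈ Q, ∀ s : ℝ, 0 ≤ s →
      1 - s/Sstar ≤ 1 + (lam + 1) * γ0 a * s := by
    intro a ha s hs
    have h1 : (lam+1) * γp ≤ (lam+1) * γ0 a :=
      mul_le_mul_of_nonpos_left (hub a ha) (by linarith)
    have h2 : (lam+1) * γp * s ≤ (lam+1) * γ0 a * s := mul_le_mul_of_nonneg_right h1 hs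
    have h3 : 1 - s/Sstar = 1 + ((lam+1) * γp) * s := by
      rw [e1]; field_simp; ring
    linarith
  have hbase_abs : ∀ a ∈ Q, ∀ s ∈ Set.Icc (0:ℝ) Sstar,
      |1 + (lam + 1) * γ0 a * s| ≤ Bb := by
    intro a ha s hs
    have h1 : |(lam+1) * γ0 a * s| ≤ m * B * Sstar := by
      rw [abs_mul, abs_mul, abs_of_neg (by linarith : lam + 1 < 0), abs_of_nonneg hs.1, ← hmdef]
      have hg := hB a ha
      rw [Real.norm_eq_abs] at hg
      have := abs_nonneg (γ0 a)
      apply mul_le_mul (mul_le_mul le_rfl hg this hm.le) hs.2 hs.1 (by positivity)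
    calc |1 + (lam + 1) * γ0 a * s| ≤ 1 + |(lam+1) * γ0 a * s| := by
          have := abs_add_le 1 ((lam+1) * γ0 a * s); simpa using this
      _ ≤ Bb := by rw [hBbdef]; linarith
  -- the function A
  set A : ℝ → ℝ := fun s => tavg (fun a => (1 + (lam + 1) * γ0 a * s) ^ pe) with hAdef
  have hpe_eq : (-1 / (lam + 1) : ℝ) = pe := by
    rw [hpedef, hlm]; field_simp
  have hGA : ∀ s ∈ Set.Ico 0 Sstar, G s = A s ^ (2*m : ℝ) := by
    intro s hs
    rw [hG s hs, hpe_eq, show (-(2 * (lam + 1)) : ℝ) = 2*m by rw [hlm]; ring, hAdef]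
  have hFcont : ∀ s : ℝ, Continuous (fun a : ℝ×ℝ => (1 + (lam + 1) * γ0 a * s) ^ pe) :=
    fun s => (Real.continuous_rpow_const hpe.le).comp
      (continuous_const.add ((continuous_const.mul hcont).mul continuous_const))
  have hAeq : A = fun s => (∫ a in Q, (1 + (lam + 1) * γ0 a * s) ^ pe) / (4*π^2) := rfl
  have contA : ContinuousOn A (Set.Icc 0 Sstar) := by
    rw [hAeq]
    apply ContinuousOn.div_const
    apply MeasureTheory.continuousOn_of_dominated (bound := fun _ => Bb ^ pe)
    · exact fun s _ => (hFcont s).aestronglyMeasurable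
    · intro s hs
      refine (ae_restrict_iff' hQm).2 (Filter.Eventually.of_forall fun a ha => ?_)
      rw [Real.norm_eq_abs]
      calc |(1 + (lam + 1) * γ0 a * s) ^ pe| ≤ |1 + (lam + 1) * γ0 a * s| ^ pe :=
            Real.abs_rpow_le_abs_rpow _ _
        _ ≤ Bb ^ pe := Real.rpow_le_rpow (abs_nonneg _) (hbase_abs a ha s hs) hpe.le
    · exact MeasureTheory.integrableOn_const hQfin.ne
    · refine Filter.Eventually.of_forall fun a => ?_
      exact ((Real.continuous_rpow_const hpe.le).comp
        (continuous_const.add (continuous_const.mul continuous_id))).continuousOn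
  have hwit : ∃ p₀ ∈ Q, γ0 p₀ < γp := by
    by_contra hcon
    push_neg at hcon
    have hle : ∫ _p in Q, γp ≤ ∫ p in Q, γ0 p :=
      MeasureTheory.setIntegral_mono_on (hint _ continuous_const) (hint _ hcont) hQm hcon
    rw [hI0, MeasureTheory.setIntegral_const, smul_eq_mul, MeasureTheory.measureReal_def, hvol] at hle
    nlinarith
  obtain ⟨p₀, hp₀Q, hp₀lt⟩ := hwit
  set M : ℝ := tavg (fun a => (γp - γ0 a) ^ pe) with hMdef
  have hM : 0 < M := by
    have hposI := integral_Q_pos' h2π (fun a => (γp - γ0 a) ^ pe)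
      ((Real.continuous_rpow_const hpe.le).comp (continuous_const.sub hcont))
      (fun p hp => Real.rpow_nonneg (sub_nonneg.2 (hub p hp)) pe)
      p₀ hp₀Q (Real.rpow_pos_of_pos (sub_pos.2 hp₀lt) pe)
    rw [hMdef]
    unfold tavg
    exact div_pos hposI harea
  have hApos : ∀ s ∈ Set.Icc (0:ℝ) Sstar, 0 < A s := by
    intro s hs
    have hbpos : 0 < 1 + (lam + 1) * γ0 p₀ * s := by
      rcases eq_or_lt_of_le hs.1 with h0 | h0
      · rw [← h0]; norm_num
      · have h1 : (lam+1)*γp*s < (lam+1)*γ0 p₀*s :=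
          mul_lt_mul_of_pos_right (mul_lt_mul_of_neg_left hp₀lt (by linarith)) h0
        have h3 : 1 + (lam+1)*γp*s = 1 - s/Sstar := by rw [e1]; field_simp; ring
        have h4 : s/Sstar ≤ 1 := (div_le_one hSpos).2 hs.2
        linarith
    have hposI := integral_Q_pos' h2π (fun a => (1 + (lam + 1) * γ0 a * s) ^ pe) (hFcont s)
      (fun p hp => Real.rpow_nonneg (by
        have h5 := hbase_ge p hp s hs.1
        have h6 : s/Sstar ≤ 1 := (div_le_one hSpos).2 hs.2
        linarith) pe)
      p₀ hp₀Q (Real.rpow_pos_of_pos hbpos pe)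
    simp only [hAdef]
    unfold tavg
    exact div_pos hposI harea
  have hlS : (lam + 1) * Sstar = -1/γp := by
    rw [hSstar]; field_simp; rw [div_self (by linarith : lam + 1 ≠ 0)]
  have hASstar : A Sstar = M / γp ^ pe := by
    have hEq : Set.EqOn (fun a => (1 + (lam + 1) * γ0 a * Sstar) ^ pe)
        (fun a => (γp - γ0 a) ^ pe / γp ^ pe) Q := by
      intro a ha
      simp only
      have h1 : 1 + (lam + 1) * γ0 a * Sstar = (γp - γ0 a)/γp := by
        have h2 : (lam+1) * γ0 a * Sstar = γ0 a * ((lam+1) * Sstar) := by ring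
        rw [h2, hlS]
        field_simp
        ring
      rw [h1, Real.div_rpow (sub_nonneg.2 (hub a ha)) hγppos.le]
    simp only [hAdef, hMdef]
    unfold tavg
    rw [MeasureTheory.setIntegral_congr_fun hQm hEq, MeasureTheory.integral_div]
    ring
  set c : ℝ := A Sstar ^ (2*m : ℝ) with hcdef
  have hASmem : Sstar ∈ Set.Icc (0:ℝ) Sstar := ⟨hSpos.le, le_refl _⟩
  have hASpos : 0 < A Sstar := hApos Sstar hASmem
  have hc : 0 < c := Real.rpow_pos_of_pos hASpos _
  set L := 𝓝[<] Tstar with hLdef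
  have hEv : ∀ᶠ t in L, t ∈ Set.Ioo 0 Tstar := by
    rw [hLdef]
    exact Filter.eventually_of_mem (Ioo_mem_nhdsLT_of_mem ⟨hTstar, le_refl _⟩) (fun t ht => ht)
  have hEvS : ∀ᶠ t in L, S t ∈ Set.Ioo 0 Sstar := by
    have h1 : ∀ᶠ t in L, 0 < S t := hlim.eventually (eventually_gt_nhds hSpos)
    filter_upwards [h1, hEv] with t ht1 ht2
    exact ⟨ht1, (hrange t (Set.Ioo_subset_Ico_self ht2)).2⟩
  have hAt : Filter.Tendsto (fun t => A (S t)) L (𝓝 (A Sstar)) := by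
    have h1 : ContinuousWithinAt A (Set.Icc 0 Sstar) Sstar := contA Sstar hASmem
    apply h1.tendsto.comp
    apply tendsto_nhdsWithin_of_tendsto_nhds_of_eventually_within _ hlim
    filter_upwards [hEv] with t ht
    have h2 := hrange t (Set.Ioo_subset_Ico_self ht)
    exact ⟨h2.1, h2.2.le⟩
  have hGc : Filter.Tendsto (fun t => G (S t)) L (𝓝 c) := by
    rw [hcdef]
    apply (hAt.rpow_const (Or.inl hASpos.ne')).congr'
    filter_upwards [hEv] with t ht
    exact (hGA (S t) (Set.mem_Ico.2 (hrange t (Set.Ioo_subset_Ico_self ht)))).symm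
  have hSd : ∀ t ∈ Set.Ioo (0:ℝ) Tstar, HasDerivAt S (G (S t)) t := by
    intro t ht
    apply (hS t (Set.Ioo_subset_Ico_self ht)).hasDerivAt
    exact Filter.mem_of_superset (Ioo_mem_nhds ht.1 ht.2) Set.Ioo_subset_Ico_self
  set Sb : ℝ → ℝ := fun u => if u < Tstar then S u else Sstar with hSbdef
  have hSbeq : ∀ u, u < Tstar → Sb u = S u := fun u hu => if_pos hu
  have hSbT : Sb Tstar = Sstar := if_neg (lt_irrefl _)
  have hSbd : ∀ u ∈ Set.Ioo (0:ℝ) Tstar, HasDerivAt Sb (G (S u)) u := by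
    intro u hu
    apply (hSd u hu).congr_of_eventuallyEq
    filter_upwards [Iio_mem_nhds hu.2] with y hy
    exact hSbeq y hy
  have hSbc : ∀ t' ∈ Set.Ioo (0:ℝ) Tstar, ContinuousOn Sb (Set.Icc t' Tstar) := by
    intro t' ht' u hu
    rcases lt_or_eq_of_le hu.2 with h | h
    · exact ((hSbd u ⟨lt_of_lt_of_le ht'.1 hu.1, h⟩).continuousAt).continuousWithinAt
    · subst h
      have h1 : Filter.Tendsto Sb (𝓝[<] u) (𝓝 Sstar) := by
        apply hlim.congr'
        filter_upwards [self_mem_nhdsWithin] with y hy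
        exact (hSbeq y hy).symm
      have h3 : Filter.Tendsto Sb (𝓝[Set.Iic u] u) (𝓝 Sstar) := by
        rw [← Set.Iio_insert, nhdsWithin_insert, Filter.tendsto_sup]
        refine ⟨?_, h1⟩
        rw [← hSbT]
        exact tendsto_pure_nhds Sb u
      have h4 : ContinuousWithinAt Sb (Set.Iic u) u := by
        rw [ContinuousWithinAt, hSbT]; exact h3
      exact h4.mono Set.Icc_subset_Iic_self
  have hslope : Filter.Tendsto (fun t => (Sstar - S t)/(Tstar - t)) L (𝓝 c) := by
    rw [Metric.tendsto_nhds]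
    intro ε hε
    have hev : ∀ᶠ u in L, |G (S u) - c| < ε ∧ u ∈ Set.Ioo 0 Tstar := by
      refine Filter.Eventually.and ?_ hEv
      have h5 := Metric.tendsto_nhds.1 hGc ε hε
      simpa [Real.dist_eq] using h5
    rw [hLdef] at hev
    obtain ⟨t₀, ht₀T, hsub⟩ :=
      mem_nhdsLT_iff_exists_Ioo_subset.1 (Filter.eventually_iff.1 hev)
    have ht₁T : max t₀ 0 < Tstar := max_lt ht₀T hTstar
    rw [hLdef]
    refine Filter.eventually_of_mem (Ioo_mem_nhdsLT_of_mem ⟨ht₁T, le_refl _⟩) ?_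
    intro t ht
    have htpos : 0 < t := lt_of_le_of_lt (le_max_right _ _) ht.1
    have ht0 : t₀ < t := lt_of_le_of_lt (le_max_left _ _) ht.1
    have htT : t < Tstar := ht.2
    obtain ⟨ξ, hξ, hslopeEq⟩ := exists_hasDerivAt_eq_slope Sb (fun u => G (S u)) htT
      (hSbc t ⟨htpos, htT⟩) (fun u hu => hSbd u ⟨lt_trans htpos hu.1, hu.2⟩)
    have hξmem := hsub ⟨lt_trans ht0 hξ.1, hξ.2⟩
    rw [Real.dist_eq]
    have h6 : (Sstar - S t)/(Tstar - t) = G (S ξ) := by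
      rw [hslopeEq, hSbT, hSbeq t htT]
    rw [h6]
    exact hξmem.1
  have hTmt : Filter.Tendsto (fun t => Tstar - t) L (𝓝 0) := by
    have h1 : Filter.Tendsto (fun t : ℝ => Tstar - t) (𝓝 Tstar) (𝓝 (Tstar - Tstar)) :=
      (continuous_const.sub continuous_id).tendsto Tstar
    rw [sub_self] at h1
    exact h1.mono_left (by rw [hLdef]; exact nhdsWithin_le_nhds)
  have hinvslope : Filter.Tendsto (fun t => (Tstar - t)/(Sstar - S t)) L (𝓝 c⁻¹) := by
    have h1 := hslope.inv₀ hc.ne'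
    apply h1.congr
    intro t
    rw [inv_div]
  set A' : ℝ → ℝ := fun s =>
    (∫ a in Q, pe * (1 + (lam + 1) * γ0 a * s) ^ (pe - 1) * ((lam + 1) * γ0 a)) / (4*π^2)
    with hA'def
  have hF'norm : ∀ s : ℝ, s ∈ Set.Icc (0:ℝ) Sstar → ∀ d : ℝ, 0 < d →
      (∀ a ∈ Q, d ≤ 1 + (lam + 1) * γ0 a * s) → ∀ a ∈ Q,
      ‖pe * (1 + (lam + 1) * γ0 a * s) ^ (pe - 1) * ((lam + 1) * γ0 a)‖
        ≤ pe * (d^(pe-1) + Bb^(pe-1)) * (m*B) := by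
    intro s hsIcc d hd hdle a ha
    have hbase := hdle a ha
    have hbpos : (0:ℝ) < 1 + (lam + 1) * γ0 a * s := lt_of_lt_of_le hd hbase
    have habs_le : |1 + (lam + 1) * γ0 a * s| ≤ Bb := hbase_abs a ha s hsIcc
    have hbBb : 1 + (lam + 1) * γ0 a * s ≤ Bb := le_trans (le_abs_self _) habs_le
    have hrp : (1 + (lam + 1) * γ0 a * s) ^ (pe - 1) ≤ d^(pe-1) + Bb^(pe-1) := by
      rcases le_or_gt pe 1 with hp | hp
      · have h1 : (1 + (lam + 1) * γ0 a * s) ^ (pe - 1) ≤ d ^ (pe - 1) :=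
          Real.rpow_le_rpow_of_nonpos hd hbase (by linarith)
        have h2 : (0:ℝ) ≤ Bb ^ (pe - 1) := Real.rpow_nonneg hBb0.le _
        linarith
      · have h1 : (1 + (lam + 1) * γ0 a * s) ^ (pe - 1) ≤ Bb ^ (pe - 1) :=
          Real.rpow_le_rpow hbpos.le hbBb (by linarith)
        have h2 : (0:ℝ) ≤ d ^ (pe - 1) := Real.rpow_nonneg hd.le _
        linarith
    have hγa : |(lam + 1) * γ0 a| ≤ m * B := by
      rw [abs_mul, abs_of_neg (by linarith : lam + 1 < 0), ← hmdef]
      have hg := hB a ha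
      rw [Real.norm_eq_abs] at hg
      exact mul_le_mul le_rfl hg (abs_nonneg _) hm.le
    have h0 : (0:ℝ) ≤ (1 + (lam + 1) * γ0 a * s) ^ (pe - 1) := Real.rpow_nonneg hbpos.le _
    have h1 : (0:ℝ) ≤ pe * (d^(pe-1) + Bb^(pe-1)) := by
      have h2 : (0:ℝ) ≤ d ^ (pe - 1) := Real.rpow_nonneg hd.le _
      have h3 : (0:ℝ) ≤ Bb ^ (pe - 1) := Real.rpow_nonneg hBb0.le _
      have := hpe.le
      positivity
    rw [Real.norm_eq_abs, abs_mul, abs_mul, abs_of_nonneg hpe.le, abs_of_nonneg h0]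
    exact mul_le_mul (mul_le_mul le_rfl hrp h0 hpe.le) hγa (abs_nonneg _) h1
  have hF'meas : ∀ s : ℝ, (∀ a ∈ Q, (0:ℝ) < 1 + (lam + 1) * γ0 a * s) →
      MeasureTheory.AEStronglyMeasurable
        (fun a : ℝ×ℝ => pe * (1 + (lam + 1) * γ0 a * s) ^ (pe - 1) * ((lam + 1) * γ0 a))
        (MeasureTheory.volume.restrict Q) := by
    intro s hpos
    apply ContinuousOn.aestronglyMeasurable _ hQm
    apply ContinuousOn.mul
    · apply ContinuousOn.mul continuousOn_const
      apply ContinuousOn.rpow_const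
      · exact (continuous_const.add
          ((continuous_const.mul hcont).mul continuous_const)).continuousOn
      · exact fun a ha => Or.inl (hpos a ha).ne'
    · exact (continuous_const.mul hcont).continuousOn
  have hbasepos : ∀ s ∈ Set.Ioo (0:ℝ) Sstar, ∀ a ∈ Q,
      1 - s/Sstar ≤ 1 + (lam + 1) * γ0 a * s ∧ 0 < 1 - s/Sstar := by
    intro s hs a ha
    refine ⟨hbase_ge a ha s hs.1.le, ?_⟩
    rw [sub_pos, div_lt_one hSpos]; exact hs.2
  have hA'deriv : ∀ s₀ ∈ Set.Ioo (0:ℝ) Sstar, HasDerivAt A (A' s₀) s₀ := by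
    intro s₀ hs₀
    have hεpos : 0 < min s₀ (Sstar - s₀) / 2 := by
      have h1 : 0 < min s₀ (Sstar - s₀) := lt_min hs₀.1 (by linarith [hs₀.2])
      linarith
    set ε := min s₀ (Sstar - s₀) / 2 with hεdef
    set δ := (Sstar - s₀)/(2*Sstar) with hδdef
    have hδ : 0 < δ := by
      rw [hδdef]
      exact div_pos (by linarith [hs₀.2]) (by linarith)
    have hballmem : ∀ s ∈ Metric.ball s₀ ε, 0 < s ∧ s ≤ (s₀ + Sstar)/2 := by
      intro s hs
      rw [Real.ball_eq_Ioo] at hs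
      have h1 : min s₀ (Sstar - s₀) ≤ s₀ := min_le_left _ _
      have h2 : min s₀ (Sstar - s₀) ≤ Sstar - s₀ := min_le_right _ _
      obtain ⟨h3, h4⟩ := hs
      rw [hεdef] at h3 h4
      constructor
      · linarith
      · linarith
    have hsIcc : ∀ s ∈ Metric.ball s₀ ε, s ∈ Set.Icc (0:ℝ) Sstar := by
      intro s hs
      obtain ⟨h1, h2⟩ := hballmem s hs
      exact ⟨h1.le, by linarith [hs₀.2]⟩
    have hbδ : ∀ s ∈ Metric.ball s₀ ε, ∀ a ∈ Q, δ ≤ 1 + (lam + 1) * γ0 a * s := by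
      intro s hs a ha
      obtain ⟨h1, h2⟩ := hballmem s hs
      have h3 := hbase_ge a ha s h1.le
      have h4 : s/Sstar ≤ (s₀ + Sstar)/(2*Sstar) := by
        rw [div_le_div_iff₀ hSpos (by linarith)]
        nlinarith
      have h5 : 1 - (s₀ + Sstar)/(2*Sstar) = (Sstar - s₀)/(2*Sstar) := by
        field_simp
        ring
      rw [hδdef]
      linarith
    have key := hasDerivAt_integral_of_dominated_loc_of_deriv_le
      (μ := MeasureTheory.volume.restrict Q)
      (F := fun s (a : ℝ×ℝ) => (1 + (lam + 1) * γ0 a * s) ^ pe)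
      (F' := fun s (a : ℝ×ℝ) =>
        pe * (1 + (lam + 1) * γ0 a * s) ^ (pe - 1) * ((lam + 1) * γ0 a))
      (x₀ := s₀) (s := Metric.ball s₀ ε)
      (bound := fun _ => pe * (δ^(pe-1) + Bb^(pe-1)) * (m*B)) (Metric.ball_mem_nhds s₀ hεpos)
      (Filter.Eventually.of_forall fun s => (hFcont s).aestronglyMeasurable)
      (hint _ (hFcont s₀))
      (hF'meas s₀ (fun a ha =>
        lt_of_lt_of_le hδ (hbδ s₀ (Metric.mem_ball_self hεpos) a ha)))
      ((ae_restrict_iff' hQm).2 (Filter.Eventually.of_forall fun a ha s hs =>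
        hF'norm s (hsIcc s hs) δ hδ (fun a' ha' => hbδ s hs a' ha') a ha))
      (MeasureTheory.integrableOn_const hQfin.ne)
      ((ae_restrict_iff' hQm).2 (Filter.Eventually.of_forall fun a ha s hs => by
        have hbpos : (0:ℝ) < 1 + (lam + 1) * γ0 a * s := lt_of_lt_of_le hδ (hbδ s hs a ha)
        have h1 : HasDerivAt (fun u : ℝ => 1 + (lam + 1) * γ0 a * u) ((lam + 1) * γ0 a) s := by
          simpa using ((hasDerivAt_id s).const_mul ((lam+1) * γ0 a)).const_add 1
        have h2 := h1.rpow_const (p := pe) (Or.inl hbpos.ne')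
        exact h2.congr_deriv (by ring)))
    rw [hAeq, hA'def]
    exact key.2.div_const _
  have hA'bound : ∀ s ∈ Set.Ioo (0:ℝ) Sstar,
      |A' s| ≤ pe * ((1 - s/Sstar)^(pe-1) + Bb^(pe-1)) * (m*B) := by
    intro s hs
    have hz : 0 < 1 - s/Sstar := (hbasepos s hs pp hppQ).2
    have hI := MeasureTheory.norm_setIntegral_le_of_norm_le_const hQfin
      (hF'norm s ⟨hs.1.le, hs.2.le⟩ (1 - s/Sstar) hz
        (fun a ha => (hbasepos s hs a ha).1))
    rw [Real.norm_eq_abs, MeasureTheory.measureReal_def, hvol] at hI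
    rw [hA'def]
    rw [abs_div, abs_of_pos harea]
    calc |∫ a in Q, pe * (1 + (lam + 1) * γ0 a * s) ^ (pe - 1) * ((lam + 1) * γ0 a)| / (4*π^2)
        ≤ (pe * ((1 - s/Sstar)^(pe-1) + Bb^(pe-1)) * (m*B) * (4*π^2)) / (4*π^2) := by
          exact (div_le_div_iff_of_pos_right harea).2 hI
      _ = pe * ((1 - s/Sstar)^(pe-1) + Bb^(pe-1)) * (m*B) := by field_simp
  have hICOT : UniqueDiffOn ℝ (Set.Ico (0:ℝ) Tstar) := uniqueDiffOn_Ico 0 Tstar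
  have hderivW : ∀ t ∈ Set.Ioo (0:ℝ) Tstar, S t ∈ Set.Ioo 0 Sstar →
      derivWithin (fun s => G (S s)) (Set.Ico 0 Tstar) t
        = 2*m * A (S t) ^ ((2*m : ℝ) - 1) * A' (S t) * G (S t) := by
    intro t ht hSt
    have hAd : HasDerivAt A (A' (S t)) (S t) := hA'deriv _ hSt
    have hASpos' : 0 < A (S t) := hApos _ ⟨hSt.1.le, hSt.2.le⟩
    have hGd := hAd.rpow_const (p := (2*m : ℝ)) (Or.inl hASpos'.ne')
    have hcomp : HasDerivAt (fun u => A (S u) ^ (2*m : ℝ))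
        (A' (S t) * (2*m) * A (S t) ^ ((2*m : ℝ) - 1) * G (S t)) t := hGd.comp t (hSd t ht)
    have heqon : Set.EqOn (fun s => G (S s)) (fun u => A (S u) ^ (2*m : ℝ))
        (Set.Ico 0 Tstar) := by
      intro u hu
      simp only
      exact hGA (S u) (Set.mem_Ico.2 (hrange u hu))
    rw [derivWithin_congr heqon (heqon (Set.Ioo_subset_Ico_self ht))]
    rw [(hcomp.hasDerivWithinAt).derivWithin (hICOT t (Set.Ioo_subset_Ico_self ht))]
    ring
  have hE2 : ∀ t ∈ Set.Ico (0:ℝ) Tstar,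
      1 + (lam + 1) * γp * S t = (Sstar - S t)/Sstar := by
    intro t ht
    rw [e1]
    field_simp
    ring
  -- limit of the tail term
  have hw : Filter.Tendsto (fun t => ((Sstar - S t)/(Tstar - t))/Sstar) L (𝓝 (c/Sstar)) :=
    hslope.div_const Sstar
  have hwpow : Filter.Tendsto (fun t => (((Sstar - S t)/(Tstar - t))/Sstar) ^ (pe - 1 : ℝ))
      L (𝓝 ((c/Sstar) ^ (pe - 1 : ℝ))) :=
    hw.rpow_const (Or.inl (div_pos hc hSpos).ne')
  have hTpow : Filter.Tendsto (fun t => (Tstar - t) ^ (pe : ℝ)) L (𝓝 0) := by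
    have h1 := hTmt.rpow_const (p := pe) (Or.inr hpe.le)
    rwa [Real.zero_rpow hpe.ne'] at h1
  have htail : Filter.Tendsto (fun t => (Tstar - t) * (1 - S t/Sstar)^(pe - 1 : ℝ)) L (𝓝 0) := by
    have h2 := hTpow.mul hwpow
    rw [zero_mul] at h2
    apply h2.congr'
    filter_upwards [hEv, hEvS] with t ht htS
    have hT : 0 < Tstar - t := by have := ht.2; linarith
    have hSlt : 0 < Sstar - S t := by have := htS.2; linarith
    have hwpos : 0 < ((Sstar - S t)/(Tstar - t))/Sstar :=
      div_pos (div_pos hSlt hT) hSpos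
    have he1 : (1 - S t/Sstar) = (Tstar - t) * (((Sstar - S t)/(Tstar - t))/Sstar) := by
      field_simp
    have he2 : (Tstar - t) ^ (pe : ℝ) = (Tstar - t) * (Tstar - t) ^ (pe - 1 : ℝ) := by
      conv_lhs => rw [show (pe:ℝ) = 1 + (pe-1) by ring]
      rw [Real.rpow_add hT, Real.rpow_one]
    rw [he1, Real.mul_rpow hT.le hwpos.le, he2]
    ring
  have hApow : Filter.Tendsto (fun t => A (S t) ^ ((2*m : ℝ) - 1)) L
      (𝓝 (A Sstar ^ ((2*m : ℝ) - 1))) := hAt.rpow_const (Or.inl hASpos.ne')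
  have hTA' : Filter.Tendsto (fun t => (Tstar - t) * A' (S t)) L (𝓝 0) := by
    apply squeeze_zero_norm'
      (a := fun t => (Tstar - t) * (pe * ((1 - S t/Sstar)^(pe-1:ℝ) + Bb^(pe-1:ℝ)) * (m*B)))
    · filter_upwards [hEv, hEvS] with t ht htS
      have hT : 0 ≤ Tstar - t := by have := ht.2; linarith
      rw [Real.norm_eq_abs, abs_mul, abs_of_nonneg hT]
      exact mul_le_mul le_rfl (hA'bound (S t) htS) (abs_nonneg _) hT
    · have h3 := (htail.const_mul (pe*(m*B))).add (hTmt.const_mul (pe*Bb^(pe-1:ℝ)*(m*B)))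
      rw [mul_zero, mul_zero, add_zero] at h3
      apply h3.congr
      intro t
      ring
  -- Part (a) limit
  have hgoalA : Filter.Tendsto (fun t => (Tstar - t) *
      (G (S t) * γp / (1 + (lam + 1) * γp * S t)
        - derivWithin (fun s => G (S s)) (Set.Ico 0 Tstar) t / (2 * (lam + 1) * G (S t))))
      L (𝓝 pe) := by
    have hf1 : Filter.Tendsto (fun t => G (S t) * γp * Sstar * ((Tstar - t)/(Sstar - S t)))
        L (𝓝 (c * γp * Sstar * c⁻¹)) :=
      ((hGc.mul_const γp).mul_const Sstar).mul hinvslope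
    have hc1 : c * γp * Sstar * c⁻¹ = pe := by
      have h2 : c * γp * Sstar * c⁻¹ = γp * Sstar := by
        field_simp
      rw [h2, hpedef, ← hSγ]
      ring
    rw [hc1] at hf1
    have hf2 : Filter.Tendsto
        (fun t => A (S t) ^ ((2*m : ℝ) - 1) * ((Tstar - t) * A' (S t))) L (𝓝 0) := by
      have h4 := hApow.mul hTA'
      rwa [mul_zero] at h4
    have hsum := hf1.add hf2
    rw [add_zero] at hsum
    apply hsum.congr'
    filter_upwards [hEv, hEvS] with t ht htS
    have hgpos : 0 < G (S t) := by
      rw [hGA (S t) (Set.mem_Ico.2 (hrange t (Set.Ioo_subset_Ico_self ht)))]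
      exact Real.rpow_pos_of_pos (hApos _ ⟨htS.1.le, htS.2.le⟩) _
    have hd := hderivW t ht htS
    have hE2t := hE2 t (Set.Ioo_subset_Ico_self ht)
    have hSne : Sstar - S t ≠ 0 := (sub_pos.2 htS.2).ne'
    rw [hd, hE2t, hlm]
    field_simp
    ring
  constructor
  · exact hgoalA
  -- Part (b)
  have hc12 : c ^ (1/2 : ℝ) = A Sstar ^ (m : ℝ) := by
    rw [hcdef, ← Real.rpow_mul hASpos.le]
    congr 1
    ring
  have hcinv : c⁻¹ = A Sstar ^ (-(2*m) : ℝ) := by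
    rw [hcdef, Real.rpow_neg hASpos.le]
  have hprod : c ^ (1/2:ℝ) * c⁻¹ = A Sstar ^ (-m : ℝ) := by
    rw [hc12, hcinv, ← Real.rpow_add hASpos]
    congr 1
    ring
  have hgpm : (γp ^ (pe:ℝ) : ℝ) ^ (m : ℝ) = γp := by
    rw [← Real.rpow_mul hγppos.le, hpem, Real.rpow_one]
  have hAm : A Sstar ^ (-m : ℝ) = γp / M ^ (m:ℝ) := by
    rw [hASstar, Real.rpow_neg (div_nonneg hM.le (Real.rpow_nonneg hγppos.le _)),
      Real.div_rpow hM.le (Real.rpow_nonneg hγppos.le _), hgpm, inv_div]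
  have hval : (Sstar * c ^ (1/2:ℝ) * c⁻¹) ^ (pe : ℝ) = m ^ (-pe:ℝ) * M⁻¹ := by
    have hstep : Sstar * c ^ (1/2:ℝ) * c⁻¹ = (1/m) / M ^ (m:ℝ) := by
      rw [mul_assoc, hprod, hAm, ← hSγ]
      ring
    rw [hstep, Real.div_rpow (by positivity) (Real.rpow_nonneg hM.le _),
      ← Real.rpow_mul hM.le, (by rw [mul_comm]; exact hpem : m * pe = 1), Real.rpow_one,
      one_div, Real.inv_rpow hm.le, ← Real.rpow_neg hm.le, div_eq_mul_inv]
  have hb1 : Filter.Tendsto (fun t => Sstar * G (S t) ^ (1/2 : ℝ) * ((Tstar - t)/(Sstar - S t)))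
      L (𝓝 (Sstar * c ^ (1/2 : ℝ) * c⁻¹)) :=
    ((tendsto_const_nhds.mul (hGc.rpow_const (Or.inl hc.ne'))).mul hinvslope)
  have hb2 : Filter.Tendsto
      (fun t => |ω0| * (Sstar * G (S t) ^ (1/2:ℝ) * ((Tstar - t)/(Sstar - S t))) ^ (pe : ℝ))
      L (𝓝 (|ω0| * m ^ (-pe:ℝ) * M⁻¹)) := by
    have h5 := (hb1.rpow_const (Or.inr hpe.le)).const_mul |ω0|
    rw [hval] at h5
    rw [show |ω0| * (m ^ (-pe:ℝ) * M⁻¹) = |ω0| * m ^ (-pe:ℝ) * M⁻¹ from (mul_assoc _ _ _).symm]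
      at h5
    exact h5
  apply hb2.congr'
  filter_upwards [hEv, hEvS] with t ht htS
  have hT : 0 < Tstar - t := by have := ht.2; linarith
  have hSlt : 0 < Sstar - S t := by have := htS.2; linarith
  have hgpos : 0 < G (S t) := by
    rw [hGA (S t) (Set.mem_Ico.2 (hrange t (Set.Ioo_subset_Ico_self ht)))]
    exact Real.rpow_pos_of_pos (hApos _ ⟨htS.1.le, htS.2.le⟩) _
  have hq : 0 < G (S t) ^ (1/2:ℝ) := Real.rpow_pos_of_pos hgpos _
  have hy : 0 < (Sstar - S t)/Sstar := div_pos hSlt hSpos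
  have hE2t := hE2 t (Set.Ioo_subset_Ico_self ht)
  have hexp : (1/(lam+1) : ℝ) = -pe := by
    rw [hpedef, hlm]
    have hmne : m ≠ 0 := hm.ne'
    field_simp
  rw [hE2t, hexp]
  have h1 : ((Sstar - S t)/Sstar / G (S t) ^ (1/2:ℝ)) ^ (-pe : ℝ)
      = (G (S t) ^ (1/2:ℝ) / ((Sstar - S t)/Sstar)) ^ (pe : ℝ) := by
    rw [Real.rpow_neg (div_nonneg hy.le hq.le), ← Real.inv_rpow (div_nonneg hy.le hq.le),
      inv_div]
  rw [h1, abs_mul, abs_of_pos (Real.rpow_pos_of_pos (div_pos hq hy) _)]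
  have hbase_eq : Sstar * G (S t) ^ (1/2:ℝ) * ((Tstar - t)/(Sstar - S t))
      = (Tstar - t) * (G (S t) ^ (1/2:ℝ) / ((Sstar - S t)/Sstar)) := by
    field_simp
  rw [hbase_eq, Real.mul_rpow hT.le (div_pos hq hy).le]
  ring
end
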